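/- arXiv:0712.4131 — 4 statements merged into one kernel-verified Lean document; each statement's English description precedes it below -/
import Mathlib

section
/- Let T be a triangulation of the convex N-gon, let F be the field of fractions of the polynomial ring over ℚ with one indeterminate X_τ for each arc τ of the polygon, and let x be a Ptolemy assignment over F satisfying x(τ) = X_τ for every τ ∈ T and every boundary arc τ. Then for every diagonal γ, the element x(γ) · ∏_{τ ∈ T} X_τ of F is the image of a polynomial in the indeterminates X_τ all of whose coefficients are equal to 0 or 1. (This is Corollary 3.9 of the paper—the positivity conjecture of Fomin–Zelevinsky, with coefficients 0 or 1 in the simply connected case—for the unpunctured disk.) -/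
open scoped Classical

namespace PolygonCA

/-- An oriented arc: an ordered pair of vertices. -/
abbrev OArc (N : ℕ) := ZMod N × ZMod N

variable (N : ℕ)

/-- `x` lies strictly between `p` and `q` in the counterclockwise cyclic order. -/
def Sbtw (p x q : ZMod N) : Prop :=
  0 < (x - p).val ∧ (x - p).val < (q - p).val

/-- A boundary arc: an unordered pair of cyclically adjacent vertices. -/
def IsBoundaryArc (e : Sym2 (ZMod N)) : Prop :=
  ∃ p : ZMod N, e = s(p, p + 1)

/-- A diagonal: an unordered pair of distinct non-adjacent vertices. -/
def IsPolyDiag (e : Sym2 (ZMod N)) : Prop :=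
  ∃ p q : ZMod N, e = s(p, q) ∧ p ≠ q ∧ q ≠ p + 1 ∧ p ≠ q + 1

/-- An arc: a diagonal or a boundary arc. -/
def IsArc (e : Sym2 (ZMod N)) : Prop :=
  IsPolyDiag N e ∨ IsBoundaryArc N e

/-- Two diagonals cross. -/
def Crosses (e f : Sym2 (ZMod N)) : Prop :=
  ∃ p q u v : ZMod N, e = s(p, q) ∧ f = s(u, v) ∧ Sbtw N p u q ∧ Sbtw N q v p

/-- A triangulation of the convex `N`-gon: a maximal set of pairwise
non-crossing diagonals. -/
structure IsTriangulation (T : Finset (Sym2 (ZMod N))) : Prop where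
  diag : ∀ e ∈ T, IsPolyDiag N e
  noncross : ∀ e ∈ T, ∀ f ∈ T, ¬ Crosses N e f
  maximal : ∀ e, IsPolyDiag N e → (∀ f ∈ T, ¬ Crosses N e f ∧ ¬ Crosses N f e) → e ∈ T

/-- For two (non-crossing) diagonals `e`, `f` both crossing the diagonal
oriented from `a` to `b`: `e` crosses it strictly before `f` does. -/
def CrossBefore (a b : ZMod N) (e f : Sym2 (ZMod N)) : Prop :=
  ∃ c d c' d' : ZMod N, e = s(c, d) ∧ f = s(c', d') ∧
    Sbtw N a c b ∧ Sbtw N b d a ∧ Sbtw N a c' b ∧ Sbtw N b d' a ∧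
    (c - a).val ≤ (c' - a).val ∧ (a - d).val ≤ (a - d').val ∧
    ((c - a).val < (c' - a).val ∨ (a - d).val < (a - d').val)

/-- A `T`-path from `a` to `b`: a nonempty concatenation of oriented arcs of
`T` or boundary arcs, starting at `a` and ending at `b`. -/
def IsTPath (T : Finset (Sym2 (ZMod N))) (a b : ZMod N) (α : List (OArc N)) : Prop :=
  α ≠ [] ∧
  (∀ e ∈ α, Sym2.mk.uncurry e ∈ T ∨ IsBoundaryArc N (Sym2.mk.uncurry e)) ∧
  α.head?.map Prod.fst = some a ∧
  α.getLast?.map Prod.snd = some b ∧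
  α.Chain' (fun e f => f.1 = e.2)

/-- A `T`-path is reduced if no arc is immediately followed by its reverse. -/
def IsReduced (α : List (OArc N)) : Prop :=
  α.Chain' (fun e f => f ≠ (e.2, e.1))

/-- A `(T,γ)`-path, where `γ` is the diagonal oriented from `a` to `b`.
(Positions are `0`-indexed here, so the paper's even positions are the odd
indices.) -/
def IsTGPath (T : Finset (Sym2 (ZMod N))) (a b : ZMod N) (α : List (OArc N)) : Prop :=
  IsTPath N T a b α ∧ IsReduced N α ∧ Odd α.length ∧
  (∀ (i : ℕ) (h : i < α.length), i % 2 = 1 →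
      Sym2.mk.uncurry (α.get ⟨i, h⟩) ∈ T ∧ Crosses N (Sym2.mk.uncurry (α.get ⟨i, h⟩)) s(a, b)) ∧
  (∀ (i j : ℕ) (hi : i < α.length) (hj : j < α.length),
      i % 2 = 1 → j % 2 = 1 → i ≠ j →
      Sym2.mk.uncurry (α.get ⟨i, hi⟩) ≠ Sym2.mk.uncurry (α.get ⟨j, hj⟩)) ∧
  (∀ (i j : ℕ) (hi : i < α.length) (hj : j < α.length),
      i % 2 = 1 → j % 2 = 1 → i < j →
      CrossBefore N a b (Sym2.mk.uncurry (α.get ⟨i, hi⟩)) (Sym2.mk.uncurry (α.get ⟨j, hj⟩)))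

/-- The Laurent monomial attached to a path: the product of `x` of the arcs in
odd (paper-)position times the inverse of `x` of the arcs in even position. -/
noncomputable def pathValue {F : Type*} [Field F] (x : Sym2 (ZMod N) → F)
    (α : List (OArc N)) : F :=
  ∏ i : Fin α.length,
    if (i : ℕ) % 2 = 0 then x (Sym2.mk.uncurry (α.get i)) else (x (Sym2.mk.uncurry (α.get i)))⁻¹

/-- `p1, p2, p3, p4` occur in (counterclockwise) cyclic order, pairwise distinct. -/
def InCyclicOrder (p1 p2 p3 p4 : ZMod N) : Prop :=
  0 < (p2 - p1).val ∧ (p2 - p1).val < (p3 - p1).val ∧ (p3 - p1).val < (p4 - p1).val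

/-- A Ptolemy assignment over a field `F`. -/
def IsPtolemy {F : Type*} [Field F] (x : Sym2 (ZMod N) → F) : Prop :=
  (∀ e, IsArc N e → x e ≠ 0) ∧
  ∀ p1 p2 p3 p4 : ZMod N, InCyclicOrder N p1 p2 p3 p4 →
    x s(p1, p3) * x s(p2, p4) = x s(p1, p2) * x s(p3, p4) + x s(p1, p4) * x s(p2, p3)

end PolygonCA

namespace PolygonCA
/-! ### Auxiliary infrastructure for the proof -/

section AuxGeom

variable {N : ℕ} [NeZero N]

lemma val_sub'' (x y : ZMod N) :
    (x - y).val = if y.val ≤ x.val then x.val - y.val else x.val + N - y.val := by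
  split_ifs with h
  · exact ZMod.val_sub h
  · have hx := ZMod.val_lt x
    have hy := ZMod.val_lt y
    have hv := ZMod.val_lt (x - y)
    have h1 : ((x - y) + y).val = ((x - y).val + y.val) % N := ZMod.val_add _ _
    rw [sub_add_cancel] at h1
    rcases Nat.lt_or_ge ((x - y).val + y.val) N with h2 | h2
    · rw [Nat.mod_eq_of_lt h2] at h1; omega
    · have h3 : ((x - y).val + y.val) % N = (x - y).val + y.val - N := by
        rw [Nat.mod_eq_sub_mod h2, Nat.mod_eq_of_lt (by omega)]
      omega

lemma sbtw_t (a : ZMod N) (p x q : ZMod N) :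
    Sbtw N p x q ↔
      (((p-a).val < (x-a).val ∧ (x-a).val < (q-a).val) ∨
       ((q-a).val < (p-a).val ∧ (p-a).val < (x-a).val) ∨
       ((x-a).val < (q-a).val ∧ (q-a).val < (p-a).val)) := by
  unfold Sbtw
  rw [← sub_sub_sub_cancel_right x p a, ← sub_sub_sub_cancel_right q p a,
    val_sub'' (x-a) (p-a), val_sub'' (q-a) (p-a)]
  have h1 := ZMod.val_lt (p - a)
  have h2 := ZMod.val_lt (x - a)
  have h3 := ZMod.val_lt (q - a)
  split_ifs <;> omega

lemma t_inj (a : ZMod N) {u v : ZMod N} (h : (u - a).val = (v - a).val) : u = v :=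
  sub_left_inj.mp (ZMod.val_injective N h)

omit [NeZero N] in
lemma t_self (a : ZMod N) : (a - a).val = 0 := by simp

omit [NeZero N] in
lemma crosses_mk {p q u v : ZMod N} (h1 : Sbtw N p u q) (h2 : Sbtw N q v p) :
    Crosses N s(p,q) s(u,v) := ⟨p, q, u, v, rfl, rfl, h1, h2⟩

lemma crosses_iff (e : Sym2 (ZMod N)) (u v : ZMod N) :
    Crosses N e s(u, v) ↔ ∃ c d : ZMod N, e = s(c, d) ∧ Sbtw N u c v ∧ Sbtw N v d u := by
  constructor
  · rintro ⟨p, q, u', v', rfl, hf, h1, h2⟩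
    have h0 := t_self p
    rcases Sym2.eq_iff.mp hf with ⟨rfl, rfl⟩ | ⟨rfl, rfl⟩
    · rw [sbtw_t p] at h1 h2
      refine ⟨q, p, Sym2.eq_swap, ?_, ?_⟩ <;> rw [sbtw_t p] <;> omega
    · rw [sbtw_t p] at h1 h2
      refine ⟨p, q, rfl, ?_, ?_⟩ <;> rw [sbtw_t p] <;> omega
  · rintro ⟨c, d, rfl, h1, h2⟩
    have h0 := t_self u
    rw [sbtw_t u] at h1 h2
    refine ⟨d, c, u, v, Sym2.eq_swap, rfl, ?_, ?_⟩ <;> rw [sbtw_t u] <;> omega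

lemma crosses_symm {e f : Sym2 (ZMod N)} (h : Crosses N e f) : Crosses N f e := by
  obtain ⟨p, q, u, v, rfl, rfl, h1, h2⟩ := h
  have h0 := t_self p
  rw [sbtw_t p] at h1 h2
  refine ⟨u, v, q, p, rfl, Sym2.eq_swap.symm, ?_, ?_⟩ <;> rw [sbtw_t p] <;> omega

end AuxGeom

/-- `X_e` as a polynomial if `e` is an arc, and `1` otherwise. -/
noncomputable def PX (N : ℕ) (e : Sym2 (ZMod N)) :
    MvPolynomial {e : Sym2 (ZMod N) // IsArc N e} ℚ :=
  if h : IsArc N e then MvPolynomial.X ⟨e, h⟩ else 1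

/-- The diagonals of `T` crossing `s(a,b)`. -/
noncomputable def crs (N : ℕ) (T : Finset (Sym2 (ZMod N))) (a b : ZMod N) :
    Finset (Sym2 (ZMod N)) :=
  T.filter fun e => Crosses N e s(a, b)

section AuxPoly

variable {N : ℕ}

lemma c01_X (i : {e : Sym2 (ZMod N) // IsArc N e}) :
    ∀ m, MvPolynomial.coeff m (MvPolynomial.X i :
      MvPolynomial {e : Sym2 (ZMod N) // IsArc N e} ℚ) = 0 ∨
      MvPolynomial.coeff m (MvPolynomial.X i :
      MvPolynomial {e : Sym2 (ZMod N) // IsArc N e} ℚ) = 1 := by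
  intro m
  rw [MvPolynomial.coeff_X']
  split_ifs <;> simp

lemma c01_monomial_mul (s : {e : Sym2 (ZMod N) // IsArc N e} →₀ ℕ)
    {p : MvPolynomial {e : Sym2 (ZMod N) // IsArc N e} ℚ}
    (h : ∀ m, MvPolynomial.coeff m p = 0 ∨ MvPolynomial.coeff m p = 1) :
    ∀ m, MvPolynomial.coeff m (MvPolynomial.monomial s 1 * p) = 0 ∨
      MvPolynomial.coeff m (MvPolynomial.monomial s 1 * p) = 1 := by
  intro m
  rw [MvPolynomial.coeff_monomial_mul']
  split_ifs with hs
  · rw [one_mul]; exact h _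
  · left; rfl

lemma X_eq_monomial (i : {e : Sym2 (ZMod N) // IsArc N e}) :
    (MvPolynomial.X i : MvPolynomial {e : Sym2 (ZMod N) // IsArc N e} ℚ) =
      MvPolynomial.monomial (Finsupp.single i 1) 1 := rfl

lemma mem_vars_of_coeff {p : MvPolynomial {e : Sym2 (ZMod N) // IsArc N e} ℚ}
    {m : {e : Sym2 (ZMod N) // IsArc N e} →₀ ℕ} {i : {e : Sym2 (ZMod N) // IsArc N e}}
    (h : MvPolynomial.coeff m p ≠ 0) (hi : m i ≠ 0) : i ∈ p.vars :=
  (MvPolynomial.mem_vars i).mpr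
    ⟨m, MvPolynomial.mem_support_iff.mpr h, Finsupp.mem_support_iff.mpr hi⟩

lemma coeff_Xmul_zero {p : MvPolynomial {e : Sym2 (ZMod N) // IsArc N e} ℚ}
    {m : {e : Sym2 (ZMod N) // IsArc N e} →₀ ℕ} {i : {e : Sym2 (ZMod N) // IsArc N e}}
    (hi : m i = 0) : MvPolynomial.coeff m (MvPolynomial.X i * p) = 0 := by
  rw [MvPolynomial.coeff_X_mul', if_neg]
  simp [Finsupp.mem_support_iff, hi]

lemma vars_PX {e : Sym2 (ZMod N)} :
    ∀ j ∈ (PX N e).vars, j.1 = e := by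
  intro j hj
  unfold PX at hj
  split_ifs at hj with h
  · rw [MvPolynomial.vars_X] at hj
    rw [Finset.mem_singleton.mp hj]
  · rw [MvPolynomial.vars_one] at hj
    exact absurd hj (Finset.notMem_empty j)

lemma vars_prodPX (s : Finset (Sym2 (ZMod N))) :
    ∀ j ∈ (∏ e ∈ s, PX N e).vars, j.1 ∈ s := by
  intro j hj
  obtain ⟨e, he, hje⟩ := Finset.mem_biUnion.mp (MvPolynomial.vars_prod _ hj)
  rw [vars_PX j hje]; exact he

lemma exists_mono (s : Finset (Sym2 (ZMod N))) :
    ∃ dd, ∏ e ∈ s, PX N e = MvPolynomial.monomial dd (1 : ℚ) := by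
  classical
  induction s using Finset.induction_on with
  | empty => exact ⟨0, by simp⟩
  | @insert e s he ih =>
    obtain ⟨dd, hdd⟩ := ih
    rw [Finset.prod_insert he, hdd]
    unfold PX
    split_ifs with h
    · exact ⟨Finsupp.single ⟨e, h⟩ 1 + dd, by
        rw [X_eq_monomial, MvPolynomial.monomial_mul, one_mul]⟩
    · exact ⟨dd, by rw [one_mul]⟩

end AuxPoly

/-- The case of no crossings: the arc is itself in `T` or a boundary arc. -/
theorem main0 {N : ℕ} [NeZero N] (T : Finset (Sym2 (ZMod N))) (hT : IsTriangulation N T)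
    (x : Sym2 (ZMod N) → FractionRing (MvPolynomial {e : Sym2 (ZMod N) // IsArc N e} ℚ))
    (hxT : ∀ e (he : IsArc N e), (e ∈ T ∨ IsBoundaryArc N e) →
      x e = algebraMap (MvPolynomial {e : Sym2 (ZMod N) // IsArc N e} ℚ) _
        (MvPolynomial.X ⟨e, he⟩))
    (a b : ZMod N) (hab : IsArc N s(a, b)) (h0 : crs N T a b = ∅) :
    ∃ p : MvPolynomial {e : Sym2 (ZMod N) // IsArc N e} ℚ,
      (∀ m, MvPolynomial.coeff m p = 0 ∨ MvPolynomial.coeff m p = 1) ∧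
      (∀ δ ∈ p.vars, ∀ w ∈ δ.1, w = a ∨ w = b ∨ ∃ τ ∈ crs N T a b, w ∈ τ) ∧
      x s(a, b) * algebraMap (MvPolynomial {e : Sym2 (ZMod N) // IsArc N e} ℚ) _
        (∏ τ ∈ crs N T a b, PX N τ) =
        algebraMap (MvPolynomial {e : Sym2 (ZMod N) // IsArc N e} ℚ) _ p := by
  have hmem : s(a, b) ∈ T ∨ IsBoundaryArc N s(a, b) := by
    rcases hab with hd | hb
    · left
      apply hT.maximal _ hd
      intro f hf
      constructor
      · intro hc
        have : f ∈ crs N T a b := Finset.mem_filter.mpr ⟨hf, crosses_symm hc⟩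
        rw [h0] at this
        exact absurd this (Finset.notMem_empty f)
      · intro hc
        have : f ∈ crs N T a b := Finset.mem_filter.mpr ⟨hf, hc⟩
        rw [h0] at this
        exact absurd this (Finset.notMem_empty f)
    · right; exact hb
  refine ⟨MvPolynomial.X ⟨s(a, b), hab⟩, c01_X _, ?_, ?_⟩
  · intro δ hδ w hw
    rw [MvPolynomial.vars_X] at hδ
    rw [Finset.mem_singleton.mp hδ] at hw
    rcases Sym2.mem_iff.mp hw with h | h
    · exact Or.inl h
    · exact Or.inr (Or.inl h)
  · rw [h0, Finset.prod_empty, map_one, mul_one]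
    exact hxT _ hab hmem

/-- Main inductive lemma: `x(a,b)` times the product of the variables of the
crossed diagonals is a polynomial with coefficients `0`/`1`, all of whose
variables are arcs with endpoints among `a`, `b` and endpoints of crossed
diagonals. -/
theorem mainlem {N : ℕ} [NeZero N] (hN : 4 ≤ N)
    (T : Finset (Sym2 (ZMod N))) (hT : IsTriangulation N T)
    (x : Sym2 (ZMod N) → FractionRing (MvPolynomial {e : Sym2 (ZMod N) // IsArc N e} ℚ))
    (hx : IsPtolemy N x)
    (hxT : ∀ e (he : IsArc N e), (e ∈ T ∨ IsBoundaryArc N e) →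
      x e = algebraMap (MvPolynomial {e : Sym2 (ZMod N) // IsArc N e} ℚ) _
        (MvPolynomial.X ⟨e, he⟩)) :
    ∀ k : ℕ, ∀ a b : ZMod N, IsArc N s(a, b) → (crs N T a b).card ≤ k →
    ∃ p : MvPolynomial {e : Sym2 (ZMod N) // IsArc N e} ℚ,
      (∀ m, MvPolynomial.coeff m p = 0 ∨ MvPolynomial.coeff m p = 1) ∧
      (∀ δ ∈ p.vars, ∀ w ∈ δ.1, w = a ∨ w = b ∨ ∃ τ ∈ crs N T a b, w ∈ τ) ∧
      x s(a, b) * algebraMap (MvPolynomial {e : Sym2 (ZMod N) // IsArc N e} ℚ) _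
        (∏ τ ∈ crs N T a b, PX N τ) =
        algebraMap (MvPolynomial {e : Sym2 (ZMod N) // IsArc N e} ℚ) _ p := by
  intro k
  induction k with
  | zero =>
    intro a b hab hcard
    exact main0 T hT x hxT a b hab (Finset.card_eq_zero.mp (Nat.le_zero.mp hcard))
  | succ k ih =>
    intro a b hab hcard
    by_cases hcempty : crs N T a b = ∅
    · exact main0 T hT x hxT a b hab hcempty
    haveI : Fact (1 < N) := ⟨by omega⟩
    have hone : (1 : ZMod N).val = 1 := ZMod.val_one N
    have h0 := t_self a
    have hblt := ZMod.val_lt (b - a)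
    -- helper for successor arithmetic
    have hsucc : ∀ v w : ZMod N, w = v + 1 → (w - a).val = ((v - a).val + 1) % N := by
      intro v w h
      have h2 : w - a = (v - a) + 1 := by rw [h]; ring
      rw [h2, ZMod.val_add, hone]
    have hmod : ∀ n : ℕ, n < N →
        ((n + 1) % N = n + 1 ∧ n + 1 < N) ∨ ((n + 1) % N = 0 ∧ n + 1 = N) := by
      intro n hn
      rcases Nat.lt_or_ge (n + 1) N with h | h
      · exact Or.inl ⟨Nat.mod_eq_of_lt h, h⟩
      · have : n + 1 = N := by omega
        exact Or.inr ⟨by rw [this, Nat.mod_self], this⟩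
    -- pick a crossing diagonal
    obtain ⟨τ0, hτ0⟩ := Finset.nonempty_iff_ne_empty.mpr hcempty
    obtain ⟨c0, d0, hτ0e, hc0, hd0⟩ :=
      (crosses_iff τ0 a b).mp (Finset.mem_filter.mp hτ0).2
    -- the sets of crossing endpoints on either side
    set C : Finset (ZMod N) :=
      Finset.univ.filter (fun u => Sbtw N a u b ∧ ∃ τ ∈ crs N T a b, u ∈ τ) with hCdef
    set D : Finset (ZMod N) :=
      Finset.univ.filter (fun v => Sbtw N b v a ∧ ∃ τ ∈ crs N T a b, v ∈ τ) with hDdef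
    have hc0C : c0 ∈ C := by
      rw [hCdef, Finset.mem_filter]
      exact ⟨Finset.mem_univ _, hc0, τ0, hτ0, by rw [hτ0e]; exact Sym2.mem_mk_left _ _⟩
    have hd0D : d0 ∈ D := by
      rw [hDdef, Finset.mem_filter]
      exact ⟨Finset.mem_univ _, hd0, τ0, hτ0, by rw [hτ0e]; exact Sym2.mem_mk_right _ _⟩
    obtain ⟨c, hcC, hcmin⟩ := C.exists_min_image (fun u => (u - a).val) ⟨c0, hc0C⟩
    obtain ⟨d, hdD, hdmax⟩ := D.exists_max_image (fun v => (v - a).val) ⟨d0, hd0D⟩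
    rw [hCdef, Finset.mem_filter] at hcC
    rw [hDdef, Finset.mem_filter] at hdD
    obtain ⟨-, hcab, τc, hτcG, hcτc⟩ := hcC
    obtain ⟨-, hdba, τd, hτdG, hdτd⟩ := hdD
    -- partner extraction
    have partner1 : ∀ τ ∈ crs N T a b, ∀ u ∈ τ, Sbtw N a u b →
        ∃ v, τ = s(u, v) ∧ Sbtw N b v a := by
      intro τ hτ u hu hub
      obtain ⟨c', d', rfl, h1, h2⟩ := (crosses_iff τ a b).mp (Finset.mem_filter.mp hτ).2
      rcases Sym2.mem_iff.mp hu with rfl | rfl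
      · exact ⟨d', rfl, h2⟩
      · exfalso
        rw [sbtw_t a] at h2 hub
        omega
    have partner2 : ∀ τ ∈ crs N T a b, ∀ v ∈ τ, Sbtw N b v a →
        ∃ u, τ = s(u, v) ∧ Sbtw N a u b := by
      intro τ hτ v hv hba
      obtain ⟨c', d', rfl, h1, h2⟩ := (crosses_iff τ a b).mp (Finset.mem_filter.mp hτ).2
      rcases Sym2.mem_iff.mp hv with rfl | rfl
      · exfalso
        rw [sbtw_t a] at h1 hba
        omega
      · exact ⟨c', rfl, h1⟩
    obtain ⟨dc, hτce, hdc⟩ := partner1 τc hτcG c hcτc hcab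
    obtain ⟨cd, hτde, hcd⟩ := partner2 τd hτdG d hdτd hdba
    -- basic t-coordinate facts
    have hdlt := ZMod.val_lt (d - a)
    have htc : 0 < (c - a).val ∧ (c - a).val < (b - a).val := by
      rw [sbtw_t a] at hcab; omega
    have htd : (b - a).val < (d - a).val := by
      rw [sbtw_t a] at hdba; omega
    have htdc : (b - a).val < (dc - a).val := by
      rw [sbtw_t a] at hdc; omega
    have htcd : 0 < (cd - a).val ∧ (cd - a).val < (b - a).val := by
      rw [sbtw_t a] at hcd; omega
    -- τ₁ = s(c,d) is a diagonal of T crossing s(a,b)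
    have hτ1 : s(c, d) ∈ crs N T a b := by
      by_cases hc_eq : cd = c
      · have h1 : τd = s(c, d) := by rw [hτde, hc_eq]
        exact h1 ▸ hτdG
      by_cases hd_eq : dc = d
      · have h1 : τc = s(c, d) := by rw [hτce, hd_eq]
        exact h1 ▸ hτcG
      exfalso
      have hcdC : cd ∈ C := by
        rw [hCdef, Finset.mem_filter]
        exact ⟨Finset.mem_univ _, hcd, τd, hτdG, by rw [hτde]; exact Sym2.mem_mk_left _ _⟩
      have hdcD : dc ∈ D := by
        rw [hDdef, Finset.mem_filter]
        exact ⟨Finset.mem_univ _, hdc, τc, hτcG, by rw [hτce]; exact Sym2.mem_mk_right _ _⟩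
      have h1 : (c - a).val ≤ (cd - a).val := hcmin cd hcdC
      have h2 : (dc - a).val ≤ (d - a).val := hdmax dc hdcD
      have h3 : (c - a).val ≠ (cd - a).val := fun h => hc_eq (t_inj a h.symm)
      have h4 : (dc - a).val ≠ (d - a).val := fun h => hd_eq (t_inj a h)
      have hcr : Crosses N τc τd := by
        rw [hτce, hτde]
        exact crosses_mk (by rw [sbtw_t a]; omega) (by rw [sbtw_t a]; omega)
      exact hT.noncross τc (Finset.mem_filter.mp hτcG).1 τd (Finset.mem_filter.mp hτdG).1 hcr
    have hτ1T : s(c, d) ∈ T := (Finset.mem_filter.mp hτ1).1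
    have hacd : IsArc N s(c, d) := Or.inl (hT.diag _ hτ1T)
    -- the four relevant arcs
    have harc_ac : IsArc N s(a, c) := by
      by_cases h : c = a + 1
      · exact Or.inr ⟨a, by rw [h]⟩
      · refine Or.inl ⟨a, c, rfl, ?_, h, ?_⟩
        · intro he
          have : (c - a).val = 0 := by rw [← he]; exact t_self a
          omega
        · intro he
          have h1 := hsucc c a he
          have h2 := hmod (c - a).val (ZMod.val_lt _)
          omega
    have harc_ad : IsArc N s(a, d) := by
      by_cases h : a = d + 1
      · refine Or.inr ⟨d, ?_⟩
        rw [← h]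
        exact Sym2.eq_swap
      · refine Or.inl ⟨a, d, rfl, ?_, ?_, h⟩
        · intro he
          have : (d - a).val = 0 := by rw [← he]; exact t_self a
          omega
        · intro he
          have h1 := hsucc a d he
          have h2 : (a - a).val = 0 := t_self a
          have h3 := hmod (a - a).val (by omega)
          omega
    have harc_cb : IsArc N s(c, b) := by
      by_cases h : b = c + 1
      · exact Or.inr ⟨c, by rw [h]⟩
      · refine Or.inl ⟨c, b, rfl, ?_, h, ?_⟩
        · intro he
          have : (c - a).val = (b - a).val := by rw [he]
          omega
        · intro he
          have h1 := hsucc b c he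
          have h2 := hmod (b - a).val hblt
          omega
    have harc_db : IsArc N s(d, b) := by
      by_cases h : d = b + 1
      · refine Or.inr ⟨b, ?_⟩
        rw [h]
        exact Sym2.eq_swap
      · refine Or.inl ⟨d, b, rfl, ?_, ?_, h⟩
        · intro he
          have : (d - a).val = (b - a).val := by rw [he]
          omega
        · intro he
          have h1 := hsucc d b he
          have h2 := hmod (d - a).val hdlt
          omega
    -- s(a,c) and s(a,d) are in T or boundary arcs
    have hmem_ac : s(a, c) ∈ T ∨ IsBoundaryArc N s(a, c) := by
      by_cases hbd : IsBoundaryArc N s(a, c)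
      · exact Or.inr hbd
      left
      apply hT.maximal _ (harc_ac.resolve_right hbd)
      intro f hf
      have key : ¬ Crosses N f s(a, c) := by
        intro hcr
        obtain ⟨u, v, rfl, h1, h2⟩ := (crosses_iff f a c).mp hcr
        rw [sbtw_t a] at h1 h2
        rcases Nat.lt_or_ge (b - a).val (v - a).val with hv | hv
        · -- f crosses s(a,b); u contradicts minimality of c
          have hfG : (s(u, v) : Sym2 (ZMod N)) ∈ crs N T a b :=
            Finset.mem_filter.mpr ⟨hf, (crosses_iff _ a b).mpr
              ⟨u, v, rfl, by rw [sbtw_t a]; omega, by rw [sbtw_t a]; omega⟩⟩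
          have huC : u ∈ C := by
            rw [hCdef, Finset.mem_filter]
            exact ⟨Finset.mem_univ _, by rw [sbtw_t a]; omega,
              s(u, v), hfG, Sym2.mem_mk_left _ _⟩
          have := hcmin u huC
          omega
        · -- f crosses s(c,d)
          have hcr2 : Crosses N s(u, v) s(c, d) :=
            crosses_mk (by rw [sbtw_t a]; omega) (by rw [sbtw_t a]; omega)
          exact hT.noncross _ hf _ hτ1T hcr2
      exact ⟨fun hcr => key (crosses_symm hcr), key⟩
    have hmem_ad : s(a, d) ∈ T ∨ IsBoundaryArc N s(a, d) := by
      by_cases hbd : IsBoundaryArc N s(a, d)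
      · exact Or.inr hbd
      left
      apply hT.maximal _ (harc_ad.resolve_right hbd)
      intro f hf
      have key : ¬ Crosses N f s(a, d) := by
        intro hcr
        obtain ⟨u, v, rfl, h1, h2⟩ := (crosses_iff f a d).mp hcr
        rw [sbtw_t a] at h1 h2
        rcases Nat.lt_or_ge (u - a).val (b - a).val with hu | hu
        · -- f crosses s(a,b); v contradicts maximality of d
          have hfG : (s(u, v) : Sym2 (ZMod N)) ∈ crs N T a b :=
            Finset.mem_filter.mpr ⟨hf, (crosses_iff _ a b).mpr
              ⟨u, v, rfl, by rw [sbtw_t a]; omega, by rw [sbtw_t a]; omega⟩⟩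
          have hvD : v ∈ D := by
            rw [hDdef, Finset.mem_filter]
            exact ⟨Finset.mem_univ _, by rw [sbtw_t a]; omega,
              s(u, v), hfG, Sym2.mem_mk_right _ _⟩
          have := hdmax v hvD
          omega
        · -- f crosses s(c,d) (as s(d,c))
          have hcr2 : Crosses N s(u, v) s(c, d) :=
            ⟨u, v, d, c, rfl, Sym2.eq_swap, by rw [sbtw_t a]; omega, by rw [sbtw_t a]; omega⟩
          exact hT.noncross _ hf _ hτ1T hcr2
      exact ⟨fun hcr => key (crosses_symm hcr), key⟩
    -- crossing sets of the two sub-arcs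
    have hsub_cb : crs N T c b ⊆ (crs N T a b).erase s(c, d) := by
      intro τ hτ
      have hτT := (Finset.mem_filter.mp hτ).1
      obtain ⟨u, v, rfl, h1, h2⟩ := (crosses_iff τ c b).mp (Finset.mem_filter.mp hτ).2
      rw [sbtw_t a] at h1 h2
      rcases (show (b - a).val < (v - a).val ∨ (v - a).val < (c - a).val by omega) with hv | hv
      · refine Finset.mem_erase.mpr ⟨?_, Finset.mem_filter.mpr ⟨hτT, (crosses_iff _ a b).mpr
          ⟨u, v, rfl, by rw [sbtw_t a]; omega, by rw [sbtw_t a]; omega⟩⟩⟩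
        intro he
        rcases Sym2.eq_iff.mp he with ⟨h3, h4⟩ | ⟨h3, h4⟩
        · have : (u - a).val = (c - a).val := by rw [h3]
          omega
        · have : (u - a).val = (d - a).val := by rw [h3]
          omega
      · exfalso
        have hcr2 : Crosses N s(c, d) s(u, v) :=
          crosses_mk (by rw [sbtw_t a]; omega) (by rw [sbtw_t a]; omega)
        exact hT.noncross _ hτ1T _ hτT hcr2
    have hsub_db : crs N T d b ⊆ (crs N T a b).erase s(c, d) := by
      intro τ hτ
      have hτT := (Finset.mem_filter.mp hτ).1
      obtain ⟨u, v, rfl, h1, h2⟩ := (crosses_iff τ d b).mp (Finset.mem_filter.mp hτ).2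
      rw [sbtw_t a] at h1 h2
      have hvuT : (s(v, u) : Sym2 (ZMod N)) ∈ T := by
        rw [Sym2.eq_swap]; exact hτT
      rcases (show (d - a).val < (u - a).val ∨ (u - a).val < (c - a).val ∨
          ((c - a).val ≤ (u - a).val ∧ (u - a).val < (b - a).val) by omega) with hu | hu | hu
      · exfalso
        have hcr2 : Crosses N s(c, d) s(v, u) :=
          crosses_mk (by rw [sbtw_t a]; omega) (by rw [sbtw_t a]; omega)
        exact hT.noncross _ hτ1T _ hvuT hcr2
      · exfalso
        have hcr2 : Crosses N s(c, d) s(v, u) :=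
          crosses_mk (by rw [sbtw_t a]; omega) (by rw [sbtw_t a]; omega)
        exact hT.noncross _ hτ1T _ hvuT hcr2
      · refine Finset.mem_erase.mpr ⟨?_, Finset.mem_filter.mpr ⟨hτT, (crosses_iff _ a b).mpr
          ⟨u, v, rfl, by rw [sbtw_t a]; omega, by rw [sbtw_t a]; omega⟩⟩⟩
        intro he
        rcases Sym2.eq_iff.mp he with ⟨h3, h4⟩ | ⟨h3, h4⟩
        · have : (v - a).val = (d - a).val := by rw [h4]
          omega
        · have : (u - a).val = (d - a).val := by rw [h3]
          omega
    -- no diagonal crossing the sub-arcs has a as an endpoint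
    have hnoA_cb : ∀ τ ∈ crs N T c b, a ∉ τ := by
      intro τ hτ ha
      have hτT := (Finset.mem_filter.mp hτ).1
      obtain ⟨u, v, rfl, h1, h2⟩ := (crosses_iff τ c b).mp (Finset.mem_filter.mp hτ).2
      rcases Sym2.mem_iff.mp ha with rfl | rfl
      · rw [sbtw_t a] at h1
        omega
      · rw [sbtw_t a] at h1 h2
        have hcr2 : Crosses N s(c, d) s(u, a) :=
          crosses_mk (by rw [sbtw_t a]; omega) (by rw [sbtw_t a]; omega)
        exact hT.noncross _ hτ1T _ hτT hcr2
    have hnoA_db : ∀ τ ∈ crs N T d b, a ∉ τ := by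
      intro τ hτ ha
      have hτT := (Finset.mem_filter.mp hτ).1
      obtain ⟨u, v, rfl, h1, h2⟩ := (crosses_iff τ d b).mp (Finset.mem_filter.mp hτ).2
      rcases Sym2.mem_iff.mp ha with rfl | rfl
      · rw [sbtw_t a] at h1 h2
        have hvaT : (s(v, a) : Sym2 (ZMod N)) ∈ T := by
          rw [Sym2.eq_swap]; exact hτT
        have hcr2 : Crosses N s(c, d) s(v, a) :=
          crosses_mk (by rw [sbtw_t a]; omega) (by rw [sbtw_t a]; omega)
        exact hT.noncross _ hτ1T _ hvaT hcr2
      · rw [sbtw_t a] at h2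
        omega
    -- cardinality bounds for the induction
    have hcard_e : ((crs N T a b).erase s(c, d)).card = (crs N T a b).card - 1 :=
      Finset.card_erase_of_mem hτ1
    have hcard_pos : 0 < (crs N T a b).card := Finset.card_pos.mpr ⟨_, hτ1⟩
    have hcard_cb : (crs N T c b).card ≤ k := by
      have := Finset.card_le_card hsub_cb
      omega
    have hcard_db : (crs N T d b).card ≤ k := by
      have := Finset.card_le_card hsub_db
      omega
    obtain ⟨pcb, h01cb, hvcb, heqcb⟩ := ih c b harc_cb hcard_cb
    obtain ⟨pdb, h01db, hvdb, heqdb⟩ := ih d b harc_db hcard_db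
    -- values of x on the known arcs
    have hPXcd : PX N s(c, d) = MvPolynomial.X ⟨s(c, d), hacd⟩ := dif_pos hacd
    have hPXac : PX N s(a, c) = MvPolynomial.X ⟨s(a, c), harc_ac⟩ := dif_pos harc_ac
    have hPXad : PX N s(a, d) = MvPolynomial.X ⟨s(a, d), harc_ad⟩ := dif_pos harc_ad
    have hxcd : x s(c, d) = algebraMap _ _ (PX N s(c, d)) := by
      rw [hPXcd]; exact hxT _ hacd (Or.inl hτ1T)
    have hxac : x s(a, c) = algebraMap _ _ (PX N s(a, c)) := by
      rw [hPXac]; exact hxT _ harc_ac hmem_ac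
    have hxad : x s(a, d) = algebraMap _ _ (PX N s(a, d)) := by
      rw [hPXad]; exact hxT _ harc_ad hmem_ad
    -- product decompositions
    have hprod : (∏ τ ∈ crs N T a b, PX N τ) =
        PX N s(c, d) * ∏ τ ∈ (crs N T a b).erase s(c, d), PX N τ :=
      (Finset.mul_prod_erase _ _ hτ1).symm
    have hE_db : (∏ τ ∈ (crs N T a b).erase s(c, d), PX N τ) =
        (∏ τ ∈ (crs N T a b).erase s(c, d) \ crs N T d b, PX N τ) *
          ∏ τ ∈ crs N T d b, PX N τ :=
      (Finset.prod_sdiff hsub_db).symm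
    have hE_cb : (∏ τ ∈ (crs N T a b).erase s(c, d), PX N τ) =
        (∏ τ ∈ (crs N T a b).erase s(c, d) \ crs N T c b, PX N τ) *
          ∏ τ ∈ crs N T c b, PX N τ :=
      (Finset.prod_sdiff hsub_cb).symm
    -- the Ptolemy relation
    have hcyc : InCyclicOrder N a c b d := by
      refine ⟨by omega, by omega, by omega⟩
    have rel := hx.2 a c b d hcyc
    have hswap_bd : x s(b, d) = x s(d, b) := by rw [Sym2.eq_swap]
    -- the two summands
    refine ⟨PX N s(a, c) * ((∏ τ ∈ (crs N T a b).erase s(c, d) \ crs N T d b, PX N τ) * pdb) +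
            PX N s(a, d) * ((∏ τ ∈ (crs N T a b).erase s(c, d) \ crs N T c b, PX N τ) * pcb),
            ?_, ?_, ?_⟩
    · -- coefficients are 0 or 1
      obtain ⟨dd1, hdd1⟩ := exists_mono ((crs N T a b).erase s(c, d) \ crs N T d b)
      obtain ⟨dd2, hdd2⟩ := exists_mono ((crs N T a b).erase s(c, d) \ crs N T c b)
      have h01q1 : ∀ m, MvPolynomial.coeff m (PX N s(a, c) *
          ((∏ τ ∈ (crs N T a b).erase s(c, d) \ crs N T d b, PX N τ) * pdb)) = 0 ∨
          MvPolynomial.coeff m (PX N s(a, c) *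
          ((∏ τ ∈ (crs N T a b).erase s(c, d) \ crs N T d b, PX N τ) * pdb)) = 1 := by
        rw [hPXac, hdd1, X_eq_monomial]
        exact c01_monomial_mul _ (c01_monomial_mul _ h01db)
      have h01q2 : ∀ m, MvPolynomial.coeff m (PX N s(a, d) *
          ((∏ τ ∈ (crs N T a b).erase s(c, d) \ crs N T c b, PX N τ) * pcb)) = 0 ∨
          MvPolynomial.coeff m (PX N s(a, d) *
          ((∏ τ ∈ (crs N T a b).erase s(c, d) \ crs N T c b, PX N τ) * pcb)) = 1 := by
        rw [hPXad, hdd2, X_eq_monomial]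
        exact c01_monomial_mul _ (c01_monomial_mul _ h01cb)
      -- the separating variable
      set i : {e : Sym2 (ZMod N) // IsArc N e} := ⟨s(a, c), harc_ac⟩ with hidef
      have hino : i ∉ (PX N s(a, d) *
          ((∏ τ ∈ (crs N T a b).erase s(c, d) \ crs N T c b, PX N τ) * pcb)).vars := by
        intro hi
        have hsubv := (MvPolynomial.vars_mul _ _) hi
        rcases Finset.mem_union.mp hsubv with h | h
        · have h1 := vars_PX i h
          rw [hidef] at h1
          rcases Sym2.eq_iff.mp h1 with ⟨h3, h4⟩ | ⟨h3, h4⟩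
          · have : (c - a).val = (d - a).val := by rw [h4]
            omega
          · have : (d - a).val = 0 := by rw [← h3]; exact t_self a
            omega
        · rcases Finset.mem_union.mp ((MvPolynomial.vars_mul _ _) h) with h | h
          · have h1 := vars_prodPX _ i h
            have h2 : i.1 ∈ crs N T a b :=
              Finset.mem_of_mem_erase (Finset.mem_sdiff.mp h1).1
            have h3 := (Finset.mem_filter.mp h2).2
            obtain ⟨u, v, he, h4, h5⟩ := (crosses_iff _ a b).mp h3
            rw [hidef] at he
            rw [sbtw_t a] at h4 h5
            rcases Sym2.eq_iff.mp he with ⟨h6, h7⟩ | ⟨h6, h7⟩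
            · have : (u - a).val = 0 := by rw [← h6]; exact t_self a
              omega
            · have : (v - a).val = 0 := by rw [← h6]; exact t_self a
              omega
          · have h1 := hvcb i h a (by rw [hidef]; exact Sym2.mem_mk_left _ _)
            rcases h1 with h2 | h2 | ⟨τ, hτ, h2⟩
            · have : (c - a).val = 0 := by rw [← h2]; exact t_self a
              omega
            · have : (b - a).val = 0 := by rw [← h2]; exact t_self a
              omega
            · exact hnoA_cb τ hτ h2
      intro m
      rw [MvPolynomial.coeff_add]
      by_cases hm : m i = 0
      · have h1 : MvPolynomial.coeff m (PX N s(a, c) *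
            ((∏ τ ∈ (crs N T a b).erase s(c, d) \ crs N T d b, PX N τ) * pdb)) = 0 := by
          rw [hPXac]
          exact coeff_Xmul_zero hm
        rw [h1, zero_add]
        exact h01q2 m
      · have h2 : MvPolynomial.coeff m (PX N s(a, d) *
            ((∏ τ ∈ (crs N T a b).erase s(c, d) \ crs N T c b, PX N τ) * pcb)) = 0 := by
          by_contra h
          exact hino (mem_vars_of_coeff h hm)
        rw [h2, add_zero]
        exact h01q1 m
    · -- variables condition
      intro δ hδ w hw
      rcases Finset.mem_union.mp ((MvPolynomial.vars_add_subset _ _) hδ) with h | h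
      · rcases Finset.mem_union.mp ((MvPolynomial.vars_mul _ _) h) with h | h
        · have h1 := vars_PX δ h
          rw [h1] at hw
          rcases Sym2.mem_iff.mp hw with h2 | h2
          · exact Or.inl h2
          · exact Or.inr (Or.inr ⟨s(c, d), hτ1, by rw [h2]; exact Sym2.mem_mk_left _ _⟩)
        · rcases Finset.mem_union.mp ((MvPolynomial.vars_mul _ _) h) with h | h
          · have h1 := vars_prodPX _ δ h
            exact Or.inr (Or.inr ⟨δ.1,
              Finset.mem_of_mem_erase (Finset.mem_sdiff.mp h1).1, hw⟩)
          · rcases hvdb δ h w hw with h2 | h2 | ⟨τ, hτ, h2⟩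
            · exact Or.inr (Or.inr ⟨s(c, d), hτ1, by rw [h2]; exact Sym2.mem_mk_right _ _⟩)
            · exact Or.inr (Or.inl h2)
            · exact Or.inr (Or.inr ⟨τ, Finset.mem_of_mem_erase (hsub_db hτ), h2⟩)
      · rcases Finset.mem_union.mp ((MvPolynomial.vars_mul _ _) h) with h | h
        · have h1 := vars_PX δ h
          rw [h1] at hw
          rcases Sym2.mem_iff.mp hw with h2 | h2
          · exact Or.inl h2
          · exact Or.inr (Or.inr ⟨s(c, d), hτ1, by rw [h2]; exact Sym2.mem_mk_right _ _⟩)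
        · rcases Finset.mem_union.mp ((MvPolynomial.vars_mul _ _) h) with h | h
          · have h1 := vars_prodPX _ δ h
            exact Or.inr (Or.inr ⟨δ.1,
              Finset.mem_of_mem_erase (Finset.mem_sdiff.mp h1).1, hw⟩)
          · rcases hvcb δ h w hw with h2 | h2 | ⟨τ, hτ, h2⟩
            · exact Or.inr (Or.inr ⟨s(c, d), hτ1, by rw [h2]; exact Sym2.mem_mk_left _ _⟩)
            · exact Or.inr (Or.inl h2)
            · exact Or.inr (Or.inr ⟨τ, Finset.mem_of_mem_erase (hsub_cb hτ), h2⟩)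
    · -- the equation
      rw [map_add, hprod, map_mul, ← hxcd, ← mul_assoc, rel, add_mul]
      congr 1
      · rw [hE_db, map_mul, hswap_bd, hxac, map_mul, map_mul, ← heqdb]
        ring
      · rw [hE_cb, map_mul, hxad, map_mul, map_mul, ← heqcb]
        ring


/-- **Corollary 3.9** (positivity, simply connected case): with `F` the field of
fractions of the polynomial ring over `ℚ` with one indeterminate `X_τ` for each
arc `τ`, and `x` a Ptolemy assignment with `x(τ) = X_τ` for all `τ ∈ T` and all
boundary arcs `τ`, for every diagonal `γ` the element `x(γ) · ∏_{τ ∈ T} X_τ`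
is the image of a polynomial all of whose coefficients are `0` or `1`. -/
theorem positivity (N : ℕ) (hN : 4 ≤ N)
    (T : Finset (Sym2 (ZMod N))) (hT : IsTriangulation N T)
    (x : Sym2 (ZMod N) →
      FractionRing (MvPolynomial {e : Sym2 (ZMod N) // IsArc N e} ℚ))
    (hx : IsPtolemy N x)
    (hxT : ∀ e (he : IsArc N e), (e ∈ T ∨ IsBoundaryArc N e) →
      x e = algebraMap (MvPolynomial {e : Sym2 (ZMod N) // IsArc N e} ℚ) _
        (MvPolynomial.X ⟨e, he⟩))
    (a b : ZMod N) (hγ : IsPolyDiag N s(a, b)) :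
    ∃ p : MvPolynomial {e : Sym2 (ZMod N) // IsArc N e} ℚ,
      (∀ m, MvPolynomial.coeff m p = 0 ∨ MvPolynomial.coeff m p = 1) ∧
      x s(a, b) * algebraMap (MvPolynomial {e : Sym2 (ZMod N) // IsArc N e} ℚ) _
          (∏ τ ∈ T.attach,
            MvPolynomial.X (⟨τ.1, Or.inl (hT.diag τ.1 τ.2)⟩ :
              {e : Sym2 (ZMod N) // IsArc N e})) =
        algebraMap (MvPolynomial {e : Sym2 (ZMod N) // IsArc N e} ℚ) _ p := by
  haveI : NeZero N := ⟨by omega⟩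
  have harc : IsArc N s(a, b) := Or.inl hγ
  obtain ⟨p0, h01, hv, heq⟩ :=
    mainlem hN T hT x hx hxT (crs N T a b).card a b harc le_rfl
  have hTa : (∏ τ ∈ T.attach,
      (MvPolynomial.X (⟨τ.1, Or.inl (hT.diag τ.1 τ.2)⟩ :
        {e : Sym2 (ZMod N) // IsArc N e}) :
        MvPolynomial {e : Sym2 (ZMod N) // IsArc N e} ℚ)) = ∏ e ∈ T, PX N e := by
    rw [← Finset.prod_attach T (fun e => PX N e)]
    refine Finset.prod_congr rfl fun τ _ => ?_
    have h1 : PX N τ.1 = MvPolynomial.X ⟨τ.1, Or.inl (hT.diag τ.1 τ.2)⟩ :=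
      dif_pos (Or.inl (hT.diag τ.1 τ.2))
    exact h1.symm
  have hsplit : (∏ e ∈ T, PX N e) =
      (∏ τ ∈ crs N T a b, PX N τ) *
        ∏ τ ∈ T.filter (fun e => ¬ Crosses N e s(a, b)), PX N τ :=
    (Finset.prod_filter_mul_prod_filter_not T _ _).symm
  obtain ⟨dd, hdd⟩ := exists_mono (T.filter (fun e => ¬ Crosses N e s(a, b)))
  refine ⟨p0 * MvPolynomial.monomial dd 1, ?_, ?_⟩
  · intro m
    rw [MvPolynomial.coeff_mul_monomial']
    split_ifs
    · rw [mul_one]; exact h01 _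
    · left; rfl
  · rw [hTa, hsplit, map_mul, ← mul_assoc, heq, ← map_mul, hdd]

end PolygonCA
end

section
/- Let T be a triangulation of the convex N-gon and let γ be a diagonal oriented from vertex a to vertex b. Then in any (T,γ)-path α = (α_1, …, α_ℓ), no arc occurs twice: for all indices j ≠ l, the underlying unordered pairs of α_j and α_l are distinct. (This is Proposition 3.3(b) of the paper for simply connected unpunctured surfaces, in the polygon model.) -/
open scoped Classical

namespace PolygonCA


section NoArcTwiceAux
set_option linter.unusedSectionVars false
set_option linter.unusedVariables false

variable {N : ℕ} [NeZero N]

private lemma vsub_cases (o x y : ZMod N) :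
    ((x-o).val ≤ (y-o).val ∧ (y - x).val = (y-o).val - (x-o).val) ∨
    ((y-o).val < (x-o).val ∧ (y - x).val = (y-o).val + N - (x-o).val) := by
  have hx : (x-o).val < N := ZMod.val_lt _
  have hy : (y-o).val < N := ZMod.val_lt _
  have key : y - x = (y-o) - (x-o) := by ring
  have ex : ((x-o).val : ZMod N) = x - o := ZMod.natCast_rightInverse _
  have ey : ((y-o).val : ZMod N) = y - o := ZMod.natCast_rightInverse _
  rcases le_or_gt (x-o).val (y-o).val with h|h
  · refine Or.inl ⟨h, ?_⟩
    have h2 : (((y-o).val - (x-o).val : ℕ) : ZMod N) = y - x := by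
      rw [Nat.cast_sub h, ex, ey, key]
    rw [← h2, ZMod.val_cast_of_lt (by omega)]
  · refine Or.inr ⟨h, ?_⟩
    have h2 : (((y-o).val + N - (x-o).val : ℕ) : ZMod N) = y - x := by
      rw [Nat.cast_sub (by omega), Nat.cast_add, ZMod.natCast_self, ex, ey, key]; ring
    rw [← h2, ZMod.val_cast_of_lt (by omega)]

private lemma val_sub_self (o : ZMod N) : (o - o).val = 0 := by simp

private lemma pi_inj {a x y : ZMod N} (h : (x-a).val = (y-a).val) : x = y := by
  have h2 : x - a = y - a := ZMod.val_injective N h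
  exact sub_left_inj.mp h2

private lemma side_excl {a b x : ZMod N} (h1 : Sbtw N a x b) (h2 : Sbtw N b x a) : False := by
  unfold Sbtw at h1 h2
  have c1 := vsub_cases a b x
  have c2 := vsub_cases a b a
  have h0 := val_sub_self (N := N) a
  have v1 : (x-a).val < N := ZMod.val_lt _
  have v2 : (b-a).val < N := ZMod.val_lt _
  omega

private lemma sbtwA_ne {a b c : ZMod N} (hc : Sbtw N a c b) : c ≠ a ∧ c ≠ b := by
  unfold Sbtw at hc
  constructor
  · rintro rfl; simp at hc
  · rintro rfl; exact absurd hc.2 (lt_irrefl _)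

private lemma sbtwB_ne {a b d : ZMod N} (hd : Sbtw N b d a) : d ≠ a ∧ d ≠ b := by
  unfold Sbtw at hd
  constructor
  · rintro rfl; exact absurd hd.2 (lt_irrefl _)
  · rintro rfl; simp at hd

private lemma shared_A {a b c ck dk : ZMod N} (hc : Sbtw N a c b)
    (hdk : Sbtw N b dk a) (h2 : c = ck ∨ c = dk) : ck = c := by
  rcases h2 with h | h
  · exact h.symm
  · rw [← h] at hdk
    exact (side_excl hc hdk).elim

private lemma shared_B {a b d ck dk : ZMod N} (hd : Sbtw N b d a)
    (hck : Sbtw N a ck b) (h2 : d = ck ∨ d = dk) : dk = d := by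
  rcases h2 with h | h
  · rw [← h] at hck
    exact (side_excl hck hd).elim
  · exact h.symm

private lemma cross_decomp {a b : ZMod N} {e : Sym2 (ZMod N)}
    (h : Crosses N e s(a,b)) :
    ∃ c d, e = s(c,d) ∧ Sbtw N a c b ∧ Sbtw N b d a := by
  obtain ⟨p, q, u, v, he, huv, h1, h2⟩ := h
  rcases Sym2.eq_iff.mp huv with ⟨rfl, rfl⟩ | ⟨rfl, rfl⟩
  · refine ⟨q, p, he.trans Sym2.eq_swap, ?_, ?_⟩ <;>
    · unfold Sbtw at *
      have c1 := vsub_cases p a q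
      have c2 := vsub_cases p a b
      have c3 := vsub_cases p b p
      have c4 := vsub_cases p b a
      have c5 := vsub_cases p q b
      have c6 := vsub_cases p q p
      have h0 := val_sub_self (N := N) p
      have v1 : (a-p).val < N := ZMod.val_lt _
      have v2 : (q-p).val < N := ZMod.val_lt _
      have v3 : (b-p).val < N := ZMod.val_lt _
      omega
  · refine ⟨p, q, he, ?_, ?_⟩ <;>
    · unfold Sbtw at *
      have c1 := vsub_cases p a p
      have c2 := vsub_cases p a b
      have c3 := vsub_cases p b q
      have c4 := vsub_cases p b a
      have c5 := vsub_cases p q a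
      have c6 := vsub_cases p q p
      have h0 := val_sub_self (N := N) p
      have v1 : (a-p).val < N := ZMod.val_lt _
      have v2 : (q-p).val < N := ZMod.val_lt _
      have v3 : (b-p).val < N := ZMod.val_lt _
      omega

private lemma decomp_unique {a b c d c' d' : ZMod N} (h : s(c,d) = s(c',d'))
    (hc : Sbtw N a c b) (hd : Sbtw N b d a) (hc' : Sbtw N a c' b) (hd' : Sbtw N b d' a) :
    c = c' ∧ d = d' := by
  rcases Sym2.eq_iff.mp h with ⟨h1, h2⟩ | ⟨h1, h2⟩
  · exact ⟨h1, h2⟩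
  · rw [← h1] at hd'
    exact (side_excl hc hd').elim

private lemma sides_cross {a b u w : ZMod N} (hu : Sbtw N a u b) (hw : Sbtw N b w a) :
    Crosses N s(u,w) s(a,b) := by
  refine ⟨u, w, b, a, rfl, Sym2.eq_swap, ?_, ?_⟩ <;>
  · unfold Sbtw at *
    have c1 := vsub_cases a u b
    have c2 := vsub_cases a u w
    have c3 := vsub_cases a w a
    have c4 := vsub_cases a w u
    have c5 := vsub_cases a b w
    have c6 := vsub_cases a b a
    have h0 := val_sub_self (N := N) a
    have v1 : (u-a).val < N := ZMod.val_lt _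
    have v2 : (w-a).val < N := ZMod.val_lt _
    have v3 : (b-a).val < N := ZMod.val_lt _
    omega

private lemma order_coords {a b : ZMod N} {e f : Sym2 (ZMod N)} {c d c' d' : ZMod N}
    (hcb : CrossBefore N a b e f)
    (he : e = s(c,d)) (hc : Sbtw N a c b) (hd : Sbtw N b d a)
    (hf : f = s(c',d')) (hc' : Sbtw N a c' b) (hd' : Sbtw N b d' a) :
    (c-a).val ≤ (c'-a).val ∧ (d'-a).val ≤ (d-a).val ∧
      ((c-a).val < (c'-a).val ∨ (d'-a).val < (d-a).val) := by
  obtain ⟨c0, d0, c0', d0', he0, hf0, hc0, hd0, hc0', hd0', hle1, hle2, hlt⟩ := hcb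
  obtain ⟨h1, h2⟩ := decomp_unique (he0.symm.trans he) hc0 hd0 hc hd
  obtain ⟨h1', h2'⟩ := decomp_unique (hf0.symm.trans hf) hc0' hd0' hc' hd'
  rw [h1] at hle1 hlt
  rw [h2] at hle2 hlt
  rw [h1'] at hle1 hlt
  rw [h2'] at hle2 hlt
  unfold Sbtw at hc hd hc' hd'
  have k1 := vsub_cases a d a
  have k2 := vsub_cases a d' a
  have k3 := vsub_cases a b d
  have k4 := vsub_cases a b d'
  have k5 := vsub_cases a b a
  have h0 := val_sub_self (N := N) a
  have v1 : (d-a).val < N := ZMod.val_lt _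
  have v2 : (d'-a).val < N := ZMod.val_lt _
  have v3 : (b-a).val < N := ZMod.val_lt _
  omega

private lemma mk_split {x : ZMod N × ZMod N} {c d : ZMod N} (h : Sym2.mk.uncurry x = s(c,d)) :
    (x.1 = c ∧ x.2 = d) ∨ (x.1 = d ∧ x.2 = c) :=
  Sym2.eq_iff.mp h

end NoArcTwiceAux

/-- **Proposition 3.3(b)** (polygon model): in a `(T,γ)`-path no arc occurs
twice: the underlying unordered pairs at distinct indices are distinct. -/
theorem no_arc_twice (N : ℕ) (hN : 4 ≤ N)
    (T : Finset (Sym2 (ZMod N))) (hT : IsTriangulation N T)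
    (a b : ZMod N) (hγ : IsPolyDiag N s(a, b))
    (α : List (OArc N)) (hα : IsTGPath N T a b α) :
    ∀ (i j : ℕ) (hi : i < α.length) (hj : j < α.length), i ≠ j →
      Sym2.mk.uncurry (α.get ⟨i, hi⟩) ≠ Sym2.mk.uncurry (α.get ⟨j, hj⟩) := by
  haveI : NeZero N := ⟨by omega⟩
  haveI : Fact (1 < N) := ⟨by omega⟩
  obtain ⟨⟨hne, hmem, hhead, hlast, hchain⟩, hred, hoddlen, hcross, hdist, hord⟩ := hα
  have hlen0 : 0 < α.length := List.length_pos_iff.mpr hne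
  have hab : a ≠ b := by
    obtain ⟨p0, q0, hpq0, hne0, -, -⟩ := hγ
    rcases Sym2.eq_iff.mp hpq0 with ⟨h1, h2⟩ | ⟨h1, h2⟩
    · rw [h1, h2]; exact hne0
    · rw [h1, h2]; exact hne0.symm
  suffices H : ∀ (i j : ℕ) (hi : i < α.length) (hj : j < α.length), i < j →
      Sym2.mk.uncurry (α.get ⟨i, hi⟩) = Sym2.mk.uncurry (α.get ⟨j, hj⟩) → False by
    intro i j hi hj hij hEq
    rcases Nat.lt_or_ge i j with h | h
    · exact H i j hi hj h hEq
    · exact H j i hj hi (by omega) hEq.symm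
  intro p q hp hq hpq heq
  -- basic accessors
  have hch' : ∀ (i j : ℕ) (hi : i < α.length) (hj : j < α.length), j = i + 1 →
      (α.get ⟨j, hj⟩).1 = (α.get ⟨i, hi⟩).2 := by
    intro i j hi hj hij
    subst hij
    simp only [List.Chain', List.isChain_iff_getElem] at hchain
    exact hchain i (by omega)
  have hs0 : (α.get ⟨0, hlen0⟩).1 = a := by
    rw [List.head?_eq_head hne] at hhead
    simpa [List.head_eq_getElem, List.get_eq_getElem] using hhead
  have hlastb : (α.get ⟨α.length - 1, by omega⟩).2 = b := by
    rw [List.getLast?_eq_getLast hne] at hlast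
    simpa [List.getLast_eq_getElem, List.get_eq_getElem] using hlast
  have hept : ∀ (i : ℕ) (h : i < α.length), (α.get ⟨i, h⟩).1 ≠ (α.get ⟨i, h⟩).2 := by
    intro i h hEq
    rcases hmem _ (List.get_mem α ⟨i, h⟩) with hmemT | hB
    · obtain ⟨p0, q0, hpq0, hne0, -, -⟩ := hT.diag _ hmemT
      rcases mk_split hpq0 with ⟨h1, h2⟩ | ⟨h1, h2⟩
      · exact hne0 (h1.symm.trans (hEq.trans h2))
      · exact hne0 (h2.symm.trans (hEq.symm.trans h1))
    · obtain ⟨p0, hp0⟩ := hB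
      have hone : (1 : ZMod N) = 0 := by
        rcases mk_split hp0 with ⟨h1, h2⟩ | ⟨h1, h2⟩
        · exact left_eq_add.mp (h1.symm.trans (hEq.trans h2))
        · exact left_eq_add.mp (h2.symm.trans (hEq.symm.trans h1))
      have h5 : (1 : ZMod N).val = 0 := by rw [hone, ZMod.val_zero]
      have h6 : (1 : ZMod N).val = 1 := ZMod.val_one N
      omega
  have hadj' : ∀ (r : ℕ) (h1 : r < α.length) (h : r + 1 < α.length),
      Sym2.mk.uncurry (α.get ⟨r, h1⟩) = Sym2.mk.uncurry (α.get ⟨r+1, h⟩) → False := by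
    intro r h1 h hEq
    have hc1 : (α.get ⟨r+1, h⟩).1 = (α.get ⟨r, h1⟩).2 := hch' r (r+1) h1 h rfl
    simp only [IsReduced, List.Chain', List.isChain_iff_getElem] at hred
    have hr := hred r (by omega)
    rcases mk_split hEq with ⟨e1, e2⟩ | ⟨e1, e2⟩
    · exact hept r h1 (e1.trans hc1)
    · exact hr (Prod.ext_iff.mpr ⟨hc1, e1.symm⟩)
  have hodds : ∀ (k : ℕ) (h : k < α.length), k % 2 = 1 →
      ∃ c d, Sym2.mk.uncurry (α.get ⟨k, h⟩) = s(c,d) ∧ Sbtw N a c b ∧ Sbtw N b d a :=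
    fun k h hk => cross_decomp ((hcross k h hk).2)
  have hmono : ∀ (k k' : ℕ) (hk : k < α.length) (hk' : k' < α.length),
      k % 2 = 1 → k' % 2 = 1 → k ≤ k' →
      ∀ c₁ d₁ c₂ d₂ : ZMod N,
        Sym2.mk.uncurry (α.get ⟨k, hk⟩) = s(c₁, d₁) → Sbtw N a c₁ b → Sbtw N b d₁ a →
        Sym2.mk.uncurry (α.get ⟨k', hk'⟩) = s(c₂, d₂) → Sbtw N a c₂ b → Sbtw N b d₂ a →
        (c₁-a).val ≤ (c₂-a).val ∧ (d₂-a).val ≤ (d₁-a).val ∧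
          (k < k' → ((c₁-a).val < (c₂-a).val ∨ (d₂-a).val < (d₁-a).val)) := by
    intro k k' hk hk' hk1 hk1' hkk c₁ d₁ c₂ d₂ hE1 hc1 hd1 hE2 hc2 hd2
    rcases eq_or_lt_of_le hkk with rfl | hlt
    · obtain ⟨h1, h2⟩ := decomp_unique (hE1.symm.trans hE2) hc1 hd1 hc2 hd2
      rw [h1, h2]
      exact ⟨le_refl _, le_refl _, fun h => absurd h (lt_irrefl _)⟩
    · have hcb := hord k k' hk hk' hk1 hk1' hlt
      have H := order_coords hcb hE1 hc1 hd1 hE2 hc2 hd2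
      exact ⟨H.1, H.2.1, fun _ => H.2.2⟩
  -- eliminate adjacency
  by_cases hqp1 : q = p + 1
  · subst hqp1; exact hadj' p hp hq heq
  have hq_gt : p + 1 < q := by omega
  -- eliminate both-odd
  by_cases hbo : p % 2 = 1 ∧ q % 2 = 1
  · exact hdist p q hp hq hbo.1 hbo.2 (by omega) heq
  by_cases hcr : Crosses N (Sym2.mk.uncurry (α.get ⟨p, hp⟩)) s(a, b)
  · -- the repeated arc crosses γ
    obtain ⟨c, d, hecd, hc, hd⟩ := cross_decomp hcr
    have hqecd : Sym2.mk.uncurry (α.get ⟨q, hq⟩) = s(c,d) := heq.symm.trans hecd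
    have hsp := mk_split hecd
    have hsq := mk_split hqecd
    have hp1 : 1 ≤ p := by
      rcases Nat.eq_zero_or_pos p with hp0 | h
      · exfalso; subst hp0
        rcases hsp with ⟨h1, -⟩ | ⟨h1, -⟩
        · exact (sbtwA_ne hc).1 (h1.symm.trans hs0)
        · exact (sbtwB_ne hd).1 (h1.symm.trans hs0)
      · exact h
    have hqB : q + 2 ≤ α.length := by
      rcases Nat.lt_or_ge (q+1) α.length with h | h
      · omega
      · exfalso
        have hqL : q = α.length - 1 := by omega
        subst hqL
        rcases hsq with ⟨-, h2⟩ | ⟨-, h2⟩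
        · exact (sbtwB_ne hd).2 (h2.symm.trans hlastb)
        · exact (sbtwA_ne hc).2 (h2.symm.trans hlastb)
    rcases Nat.mod_two_eq_zero_or_one p with hp2 | hp2 <;>
      rcases Nat.mod_two_eq_zero_or_one q with hq2p | hq2p
    · -- A4 : both even
      have hpm1 : p - 1 < α.length := by omega
      have hpp1 : p + 1 < α.length := by omega
      have hqm1 : q - 1 < α.length := by omega
      have hqq1 : q + 1 < α.length := by omega
      obtain ⟨c0, d0, hE0, hc0, hd0⟩ := hodds (p-1) hpm1 (by omega)
      obtain ⟨c1, d1, hE1, hc1, hd1⟩ := hodds (p+1) hpp1 (by omega)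
      obtain ⟨c2, d2, hE2, hc2, hd2⟩ := hodds (q-1) hqm1 (by omega)
      obtain ⟨c3, d3, hE3, hc3, hd3⟩ := hodds (q+1) hqq1 (by omega)
      have e0 : (α.get ⟨p, hp⟩).1 = (α.get ⟨p-1, hpm1⟩).2 := hch' (p-1) p hpm1 hp (by omega)
      have e1 : (α.get ⟨p+1, hpp1⟩).1 = (α.get ⟨p, hp⟩).2 := hch' p (p+1) hp hpp1 rfl
      have e2 : (α.get ⟨q, hq⟩).1 = (α.get ⟨q-1, hqm1⟩).2 := hch' (q-1) q hqm1 hq (by omega)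
      have e3 : (α.get ⟨q+1, hqq1⟩).1 = (α.get ⟨q, hq⟩).2 := hch' q (q+1) hq hqq1 rfl
      have s0 := mk_split hE0
      have s1 := mk_split hE1
      have s2 := mk_split hE2
      have s3 := mk_split hE3
      have M0 := hmono (p-1) (p+1) hpm1 hpp1 (by omega) (by omega) (by omega)
        c0 d0 c1 d1 hE0 hc0 hd0 hE1 hc1 hd1
      rcases hsp with ⟨f1, f2⟩ | ⟨f1, f2⟩
      · -- s_p = c, t_p = d
        have g0 : c = c0 ∨ c = d0 := by
          have hx : (α.get ⟨p-1, hpm1⟩).2 = c := e0.symm.trans f1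
          rcases s0 with ⟨-, h⟩ | ⟨-, h⟩
          · exact Or.inr (hx.symm.trans h)
          · exact Or.inl (hx.symm.trans h)
        have hc0c : c0 = c := shared_A hc hd0 g0
        have g1 : d = c1 ∨ d = d1 := by
          have hx : (α.get ⟨p+1, hpp1⟩).1 = d := e1.trans f2
          rcases s1 with ⟨h, -⟩ | ⟨h, -⟩
          · exact Or.inl (hx.symm.trans h)
          · exact Or.inr (hx.symm.trans h)
        have hd1d : d1 = d := shared_B hd hc1 g1
        rcases hsq with ⟨f3, f4⟩ | ⟨f3, f4⟩
        · -- s_q = c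
          have g2 : c = c2 ∨ c = d2 := by
            have hx : (α.get ⟨q-1, hqm1⟩).2 = c := e2.symm.trans f3
            rcases s2 with ⟨-, h⟩ | ⟨-, h⟩
            · exact Or.inr (hx.symm.trans h)
            · exact Or.inl (hx.symm.trans h)
          have hc2c : c2 = c := shared_A hc hd2 g2
          have M1 := hmono (p+1) (q-1) hpp1 hqm1 (by omega) (by omega) (by omega)
            c1 d1 c2 d2 hE1 hc1 hd1 hE2 hc2 hd2
          have ec0 : (c0-a).val = (c-a).val := by rw [hc0c]
          have ec2 : (c2-a).val = (c-a).val := by rw [hc2c]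
          have hc1c : c1 = c := pi_inj (show (c1-a).val = (c-a).val by omega)
          refine hadj' p hp hpp1 (hecd.trans ?_)
          rw [hc1c, hd1d] at hE1
          exact hE1.symm
        · -- s_q = d, t_q = c
          have g3 : c = c3 ∨ c = d3 := by
            have hx : (α.get ⟨q+1, hqq1⟩).1 = c := e3.trans f4
            rcases s3 with ⟨h, -⟩ | ⟨h, -⟩
            · exact Or.inl (hx.symm.trans h)
            · exact Or.inr (hx.symm.trans h)
          have hc3c : c3 = c := shared_A hc hd3 g3
          have M1 := hmono (p+1) (q+1) hpp1 hqq1 (by omega) (by omega) (by omega)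
            c1 d1 c3 d3 hE1 hc1 hd1 hE3 hc3 hd3
          have ec0 : (c0-a).val = (c-a).val := by rw [hc0c]
          have ec3 : (c3-a).val = (c-a).val := by rw [hc3c]
          have hc1c : c1 = c := pi_inj (show (c1-a).val = (c-a).val by omega)
          refine hadj' p hp hpp1 (hecd.trans ?_)
          rw [hc1c, hd1d] at hE1
          exact hE1.symm
      · -- s_p = d, t_p = c
        have g0 : d = c0 ∨ d = d0 := by
          have hx : (α.get ⟨p-1, hpm1⟩).2 = d := e0.symm.trans f1
          rcases s0 with ⟨-, h⟩ | ⟨-, h⟩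
          · exact Or.inr (hx.symm.trans h)
          · exact Or.inl (hx.symm.trans h)
        have hd0d : d0 = d := shared_B hd hc0 g0
        have g1 : c = c1 ∨ c = d1 := by
          have hx : (α.get ⟨p+1, hpp1⟩).1 = c := e1.trans f2
          rcases s1 with ⟨h, -⟩ | ⟨h, -⟩
          · exact Or.inl (hx.symm.trans h)
          · exact Or.inr (hx.symm.trans h)
        have hc1c : c1 = c := shared_A hc hd1 g1
        rcases hsq with ⟨f3, f4⟩ | ⟨f3, f4⟩
        · -- s_q = c, t_q = d : d3 = d
          have g3 : d = c3 ∨ d = d3 := by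
            have hx : (α.get ⟨q+1, hqq1⟩).1 = d := e3.trans f4
            rcases s3 with ⟨h, -⟩ | ⟨h, -⟩
            · exact Or.inl (hx.symm.trans h)
            · exact Or.inr (hx.symm.trans h)
          have hd3d : d3 = d := shared_B hd hc3 g3
          have M1 := hmono (p+1) (q+1) hpp1 hqq1 (by omega) (by omega) (by omega)
            c1 d1 c3 d3 hE1 hc1 hd1 hE3 hc3 hd3
          have ed0 : (d0-a).val = (d-a).val := by rw [hd0d]
          have ed3 : (d3-a).val = (d-a).val := by rw [hd3d]
          have hd1d : d1 = d := pi_inj (show (d1-a).val = (d-a).val by omega)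
          refine hadj' p hp hpp1 (hecd.trans ?_)
          rw [hc1c, hd1d] at hE1
          exact hE1.symm
        · -- s_q = d : d2 = d
          have g2 : d = c2 ∨ d = d2 := by
            have hx : (α.get ⟨q-1, hqm1⟩).2 = d := e2.symm.trans f3
            rcases s2 with ⟨-, h⟩ | ⟨-, h⟩
            · exact Or.inr (hx.symm.trans h)
            · exact Or.inl (hx.symm.trans h)
          have hd2d : d2 = d := shared_B hd hc2 g2
          have M1 := hmono (p+1) (q-1) hpp1 hqm1 (by omega) (by omega) (by omega)
            c1 d1 c2 d2 hE1 hc1 hd1 hE2 hc2 hd2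
          have ed0 : (d0-a).val = (d-a).val := by rw [hd0d]
          have ed2 : (d2-a).val = (d-a).val := by rw [hd2d]
          have hd1d : d1 = d := pi_inj (show (d1-a).val = (d-a).val by omega)
          refine hadj' p hp hpp1 (hecd.trans ?_)
          rw [hc1c, hd1d] at hE1
          exact hE1.symm
    · -- A3 : p even, q odd
      have hpm1 : p - 1 < α.length := by omega
      have hpp1 : p + 1 < α.length := by omega
      obtain ⟨c0, d0, hE0, hc0, hd0⟩ := hodds (p-1) hpm1 (by omega)
      obtain ⟨c1, d1, hE1, hc1, hd1⟩ := hodds (p+1) hpp1 (by omega)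
      have e0 : (α.get ⟨p, hp⟩).1 = (α.get ⟨p-1, hpm1⟩).2 := hch' (p-1) p hpm1 hp (by omega)
      have e1 : (α.get ⟨p+1, hpp1⟩).1 = (α.get ⟨p, hp⟩).2 := hch' p (p+1) hp hpp1 rfl
      have s0 := mk_split hE0
      have s1 := mk_split hE1
      have M1 := hmono (p-1) (p+1) hpm1 hpp1 (by omega) (by omega) (by omega)
        c0 d0 c1 d1 hE0 hc0 hd0 hE1 hc1 hd1
      have M2 := hmono (p+1) q hpp1 hq (by omega) hq2p (by omega)
        c1 d1 c d hE1 hc1 hd1 hqecd hc hd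
      have S2 := M2.2.2 (by omega)
      rcases hsp with ⟨f1, f2⟩ | ⟨f1, f2⟩
      · -- s_p = c, t_p = d : c0 = c, d1 = d
        have g0 : c = c0 ∨ c = d0 := by
          have hx : (α.get ⟨p-1, hpm1⟩).2 = c := e0.symm.trans f1
          rcases s0 with ⟨-, h⟩ | ⟨-, h⟩
          · exact Or.inr (hx.symm.trans h)
          · exact Or.inl (hx.symm.trans h)
        have hc0c : c0 = c := shared_A hc hd0 g0
        have g1 : d = c1 ∨ d = d1 := by
          have hx : (α.get ⟨p+1, hpp1⟩).1 = d := e1.trans f2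
          rcases s1 with ⟨h, -⟩ | ⟨h, -⟩
          · exact Or.inl (hx.symm.trans h)
          · exact Or.inr (hx.symm.trans h)
        have hd1d : d1 = d := shared_B hd hc1 g1
        have ec0 : (c0-a).val = (c-a).val := by rw [hc0c]
        have ed1 : (d1-a).val = (d-a).val := by rw [hd1d]
        omega
      · -- s_p = d, t_p = c : d0 = d, c1 = c
        have g0 : d = c0 ∨ d = d0 := by
          have hx : (α.get ⟨p-1, hpm1⟩).2 = d := e0.symm.trans f1
          rcases s0 with ⟨-, h⟩ | ⟨-, h⟩
          · exact Or.inr (hx.symm.trans h)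
          · exact Or.inl (hx.symm.trans h)
        have hd0d : d0 = d := shared_B hd hc0 g0
        have g1 : c = c1 ∨ c = d1 := by
          have hx : (α.get ⟨p+1, hpp1⟩).1 = c := e1.trans f2
          rcases s1 with ⟨h, -⟩ | ⟨h, -⟩
          · exact Or.inl (hx.symm.trans h)
          · exact Or.inr (hx.symm.trans h)
        have hc1c : c1 = c := shared_A hc hd1 g1
        have ed0 : (d0-a).val = (d-a).val := by rw [hd0d]
        have ec1 : (c1-a).val = (c-a).val := by rw [hc1c]
        omega
    · -- A2 : p odd, q even
      have hqm1 : q - 1 < α.length := by omega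
      have hqq1 : q + 1 < α.length := by omega
      obtain ⟨c2, d2, hE2, hc2, hd2⟩ := hodds (q-1) hqm1 (by omega)
      obtain ⟨c3, d3, hE3, hc3, hd3⟩ := hodds (q+1) hqq1 (by omega)
      have e2 : (α.get ⟨q, hq⟩).1 = (α.get ⟨q-1, hqm1⟩).2 := hch' (q-1) q hqm1 hq (by omega)
      have e3 : (α.get ⟨q+1, hqq1⟩).1 = (α.get ⟨q, hq⟩).2 := hch' q (q+1) hq hqq1 rfl
      have s2 := mk_split hE2
      have s3 := mk_split hE3
      have M1 := hmono p (q-1) hp hqm1 hp2 (by omega) (by omega)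
        c d c2 d2 hecd hc hd hE2 hc2 hd2
      have S1 := M1.2.2 (by omega)
      have M2 := hmono (q-1) (q+1) hqm1 hqq1 (by omega) (by omega) (by omega)
        c2 d2 c3 d3 hE2 hc2 hd2 hE3 hc3 hd3
      rcases hsq with ⟨f3, f4⟩ | ⟨f3, f4⟩
      · -- s_q = c, t_q = d : c2 = c, d3 = d
        have g2 : c = c2 ∨ c = d2 := by
          have hx : (α.get ⟨q-1, hqm1⟩).2 = c := e2.symm.trans f3
          rcases s2 with ⟨-, h⟩ | ⟨-, h⟩
          · exact Or.inr (hx.symm.trans h)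
          · exact Or.inl (hx.symm.trans h)
        have hc2c : c2 = c := shared_A hc hd2 g2
        have g3 : d = c3 ∨ d = d3 := by
          have hx : (α.get ⟨q+1, hqq1⟩).1 = d := e3.trans f4
          rcases s3 with ⟨h, -⟩ | ⟨h, -⟩
          · exact Or.inl (hx.symm.trans h)
          · exact Or.inr (hx.symm.trans h)
        have hd3d : d3 = d := shared_B hd hc3 g3
        have ec2 : (c2-a).val = (c-a).val := by rw [hc2c]
        have ed3 : (d3-a).val = (d-a).val := by rw [hd3d]
        omega
      · -- s_q = d, t_q = c : d2 = d, c3 = c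
        have g2 : d = c2 ∨ d = d2 := by
          have hx : (α.get ⟨q-1, hqm1⟩).2 = d := e2.symm.trans f3
          rcases s2 with ⟨-, h⟩ | ⟨-, h⟩
          · exact Or.inr (hx.symm.trans h)
          · exact Or.inl (hx.symm.trans h)
        have hd2d : d2 = d := shared_B hd hc2 g2
        have g3 : c = c3 ∨ c = d3 := by
          have hx : (α.get ⟨q+1, hqq1⟩).1 = c := e3.trans f4
          rcases s3 with ⟨h, -⟩ | ⟨h, -⟩
          · exact Or.inl (hx.symm.trans h)
          · exact Or.inr (hx.symm.trans h)
        have hc3c : c3 = c := shared_A hc hd3 g3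
        have ed2 : (d2-a).val = (d-a).val := by rw [hd2d]
        have ec3 : (c3-a).val = (c-a).val := by rw [hc3c]
        omega
    · -- both odd: contradiction with hbo
      exact absurd ⟨hp2, hq2p⟩ hbo
  · -- NOCROSS : the repeated arc does not cross γ
    have hp2 : p % 2 = 0 := by
      rcases Nat.mod_two_eq_zero_or_one p with h | h
      · exact h
      · exact absurd ((hcross p hp h).2) hcr
    have hq2 : q % 2 = 0 := by
      rcases Nat.mod_two_eq_zero_or_one q with h | h
      · exact h
      · have hx := (hcross q hq h).2
        rw [← heq] at hx
        exact absurd hx hcr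
    have hw := mk_split heq
    by_cases hp0 : p = 0
    · subst hp0
      have hqm1 : q - 1 < α.length := by omega
      obtain ⟨c2, d2, hE2, hc2, hd2⟩ := hodds (q-1) hqm1 (by omega)
      have e2 : (α.get ⟨q, hq⟩).1 = (α.get ⟨q-1, hqm1⟩).2 := hch' (q-1) q hqm1 hq (by omega)
      have s2 := mk_split hE2
      have hw3ne : (α.get ⟨q, hq⟩).1 ≠ a := by
        rcases s2 with ⟨-, h⟩ | ⟨-, h⟩
        · rw [e2, h]; exact (sbtwB_ne hd2).1
        · rw [e2, h]; exact (sbtwA_ne hc2).1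
      rcases hw with ⟨h1, h2⟩ | ⟨h1, h2⟩
      · exact hw3ne (h1.symm.trans hs0)
      · have hw4a : (α.get ⟨q, hq⟩).2 = a := h1.symm.trans hs0
        by_cases hqL : q + 1 < α.length
        · obtain ⟨c3, d3, hE3, hc3, hd3⟩ := hodds (q+1) hqL (by omega)
          have e3 : (α.get ⟨q+1, hqL⟩).1 = (α.get ⟨q, hq⟩).2 := hch' q (q+1) hq hqL rfl
          rcases mk_split hE3 with ⟨h, -⟩ | ⟨h, -⟩
          · exact (sbtwA_ne hc3).1 (h.symm.trans (e3.trans hw4a))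
          · exact (sbtwB_ne hd3).1 (h.symm.trans (e3.trans hw4a))
        · have hq' : q = α.length - 1 := by omega
          subst hq'
          exact hab (hw4a.symm.trans hlastb)
    · by_cases hqL : q = α.length - 1
      · subst hqL
        have hpp1 : p + 1 < α.length := by omega
        obtain ⟨c1, d1, hE1, hc1, hd1⟩ := hodds (p+1) hpp1 (by omega)
        have e1 : (α.get ⟨p+1, hpp1⟩).1 = (α.get ⟨p, hp⟩).2 := hch' p (p+1) hp hpp1 rfl
        have s1 := mk_split hE1
        have hw2ne : (α.get ⟨p, hp⟩).2 ≠ b := by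
          rcases s1 with ⟨h, -⟩ | ⟨h, -⟩
          · rw [← e1, h]; exact (sbtwA_ne hc1).2
          · rw [← e1, h]; exact (sbtwB_ne hd1).2
        rcases hw with ⟨h1, h2⟩ | ⟨h1, h2⟩
        · exact hw2ne (h2.trans hlastb)
        · have hw1b : (α.get ⟨p, hp⟩).1 = b := h1.trans hlastb
          have hpm1 : p - 1 < α.length := by omega
          obtain ⟨c0, d0, hE0, hc0, hd0⟩ := hodds (p-1) hpm1 (by omega)
          have e0 : (α.get ⟨p, hp⟩).1 = (α.get ⟨p-1, hpm1⟩).2 := hch' (p-1) p hpm1 hp (by omega)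
          rcases mk_split hE0 with ⟨-, h⟩ | ⟨-, h⟩
          · exact (sbtwB_ne hd0).2 (h.symm.trans (e0.symm.trans hw1b))
          · exact (sbtwA_ne hc0).2 (h.symm.trans (e0.symm.trans hw1b))
      · -- interior case
        have hpm1 : p - 1 < α.length := by omega
        have hpp1 : p + 1 < α.length := by omega
        have hqm1 : q - 1 < α.length := by omega
        have hqq1 : q + 1 < α.length := by omega
        obtain ⟨c0, d0, hE0, hc0, hd0⟩ := hodds (p-1) hpm1 (by omega)
        obtain ⟨c1, d1, hE1, hc1, hd1⟩ := hodds (p+1) hpp1 (by omega)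
        obtain ⟨c2, d2, hE2, hc2, hd2⟩ := hodds (q-1) hqm1 (by omega)
        obtain ⟨c3, d3, hE3, hc3, hd3⟩ := hodds (q+1) hqq1 (by omega)
        have e0 : (α.get ⟨p, hp⟩).1 = (α.get ⟨p-1, hpm1⟩).2 := hch' (p-1) p hpm1 hp (by omega)
        have e1 : (α.get ⟨p+1, hpp1⟩).1 = (α.get ⟨p, hp⟩).2 := hch' p (p+1) hp hpp1 rfl
        have e2 : (α.get ⟨q, hq⟩).1 = (α.get ⟨q-1, hqm1⟩).2 := hch' (q-1) q hqm1 hq (by omega)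
        have e3 : (α.get ⟨q+1, hqq1⟩).1 = (α.get ⟨q, hq⟩).2 := hch' q (q+1) hq hqq1 rfl
        have m1 : (α.get ⟨p, hp⟩).1 = c0 ∨ (α.get ⟨p, hp⟩).1 = d0 := by
          rcases mk_split hE0 with ⟨-, h⟩ | ⟨-, h⟩
          · exact Or.inr (e0.trans h)
          · exact Or.inl (e0.trans h)
        have m2 : (α.get ⟨p, hp⟩).2 = c1 ∨ (α.get ⟨p, hp⟩).2 = d1 := by
          rcases mk_split hE1 with ⟨h, -⟩ | ⟨h, -⟩
          · exact Or.inl (e1.symm.trans h)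
          · exact Or.inr (e1.symm.trans h)
        have m3 : (α.get ⟨q, hq⟩).1 = c2 ∨ (α.get ⟨q, hq⟩).1 = d2 := by
          rcases mk_split hE2 with ⟨-, h⟩ | ⟨-, h⟩
          · exact Or.inr (e2.trans h)
          · exact Or.inl (e2.trans h)
        have m4 : (α.get ⟨q, hq⟩).2 = c3 ∨ (α.get ⟨q, hq⟩).2 = d3 := by
          rcases mk_split hE3 with ⟨h, -⟩ | ⟨h, -⟩
          · exact Or.inl (e3.symm.trans h)
          · exact Or.inr (e3.symm.trans h)
        have hwne : ((α.get ⟨p, hp⟩).1 - a).val ≠ ((α.get ⟨p, hp⟩).2 - a).val :=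
          fun h => hept p hp (pi_inj h)
        have M0 := hmono (p-1) (p+1) hpm1 hpp1 (by omega) (by omega) (by omega)
          c0 d0 c1 d1 hE0 hc0 hd0 hE1 hc1 hd1
        have M1 := hmono (p+1) (q-1) hpp1 hqm1 (by omega) (by omega) (by omega)
          c1 d1 c2 d2 hE1 hc1 hd1 hE2 hc2 hd2
        have M2 := hmono (q-1) (q+1) hqm1 hqq1 (by omega) (by omega) (by omega)
          c2 d2 c3 d3 hE2 hc2 hd2 hE3 hc3 hd3
        have hpair : ((((α.get ⟨q, hq⟩).1)-a).val = (((α.get ⟨p, hp⟩).1)-a).val ∧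
              (((α.get ⟨q, hq⟩).2)-a).val = (((α.get ⟨p, hp⟩).2)-a).val) ∨
            ((((α.get ⟨q, hq⟩).1)-a).val = (((α.get ⟨p, hp⟩).2)-a).val ∧
              (((α.get ⟨q, hq⟩).2)-a).val = (((α.get ⟨p, hp⟩).1)-a).val) := by
          rcases hw with ⟨h1, h2⟩ | ⟨h1, h2⟩
          · exact Or.inl ⟨by rw [h1], by rw [h2]⟩
          · exact Or.inr ⟨by rw [h2], by rw [h1]⟩
        rcases m1 with hB1 | hB1
        · -- w1 on side A
          rcases m2 with hB2 | hB2
          · -- w2 on side A too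
            have hw3 : Sbtw N a ((α.get ⟨q, hq⟩).1) b := by
              rcases hw with ⟨h1, h2⟩ | ⟨h1, h2⟩
              · rw [← h1, hB1]; exact hc0
              · rw [← h2, hB2]; exact hc1
            have hw4 : Sbtw N a ((α.get ⟨q, hq⟩).2) b := by
              rcases hw with ⟨h1, h2⟩ | ⟨h1, h2⟩
              · rw [← h2, hB2]; exact hc1
              · rw [← h1, hB1]; exact hc0
            have hc2w : c2 = (α.get ⟨q, hq⟩).1 := shared_A hw3 hd2 m3
            have hc3w : c3 = (α.get ⟨q, hq⟩).2 := shared_A hw4 hd3 m4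
            have q1 : (c0-a).val = (((α.get ⟨p, hp⟩).1)-a).val := by rw [hB1]
            have q2 : (c1-a).val = (((α.get ⟨p, hp⟩).2)-a).val := by rw [hB2]
            have q3 : (c2-a).val = (((α.get ⟨q, hq⟩).1)-a).val := by rw [hc2w]
            have q4 : (c3-a).val = (((α.get ⟨q, hq⟩).2)-a).val := by rw [hc3w]
            omega
          · -- w1 side A, w2 side B: the arc crosses γ
            apply hcr
            have : Sym2.mk.uncurry (α.get ⟨p, hp⟩) = s((α.get ⟨p, hp⟩).1, (α.get ⟨p, hp⟩).2) := rfl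
            rw [this, hB1, hB2]
            exact sides_cross hc0 hd1
        · rcases m2 with hB2 | hB2
          · -- w1 side B, w2 side A : crosses
            apply hcr
            have : Sym2.mk.uncurry (α.get ⟨p, hp⟩) = s((α.get ⟨p, hp⟩).1, (α.get ⟨p, hp⟩).2) := rfl
            rw [this, hB1, hB2, Sym2.eq_swap]
            exact sides_cross hc1 hd0
          · -- both on side B
            have hw3 : Sbtw N b ((α.get ⟨q, hq⟩).1) a := by
              rcases hw with ⟨h1, h2⟩ | ⟨h1, h2⟩
              · rw [← h1, hB1]; exact hd0
              · rw [← h2, hB2]; exact hd1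
            have hw4 : Sbtw N b ((α.get ⟨q, hq⟩).2) a := by
              rcases hw with ⟨h1, h2⟩ | ⟨h1, h2⟩
              · rw [← h2, hB2]; exact hd1
              · rw [← h1, hB1]; exact hd0
            have hd2w : d2 = (α.get ⟨q, hq⟩).1 := shared_B hw3 hc2 m3
            have hd3w : d3 = (α.get ⟨q, hq⟩).2 := shared_B hw4 hc3 m4
            have q1 : (d0-a).val = (((α.get ⟨p, hp⟩).1)-a).val := by rw [hB1]
            have q2 : (d1-a).val = (((α.get ⟨p, hp⟩).2)-a).val := by rw [hB2]
            have q3 : (d2-a).val = (((α.get ⟨q, hq⟩).1)-a).val := by rw [hd2w]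
            have q4 : (d3-a).val = (((α.get ⟨q, hq⟩).2)-a).val := by rw [hd3w]
            omega

end PolygonCA
end

section
/- Let T be a triangulation of the convex N-gon, let γ be a diagonal oriented from vertex a to vertex b, let F be the field of fractions of the polynomial ring over ℚ with one indeterminate X_τ for each arc τ, and set x(τ) = X_τ for every arc τ. Then the map α ↦ x(α) from P_T(γ) to F is injective: distinct (T,γ)-paths give distinct Laurent monomials. (This is Proposition 3.3(c) of the paper for simply connected unpunctured surfaces, in the polygon model.) -/
open scoped Classical

namespace PolygonCA

section Aux
variable {N : ℕ}

lemma sub_val (hN : 0 < N) (z w : ZMod N) :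
    (z - w).val = if w.val ≤ z.val then z.val - w.val else z.val + N - w.val := by
  haveI : NeZero N := ⟨by omega⟩
  have hz := ZMod.val_lt z
  have hw := ZMod.val_lt w
  by_cases h0 : w = 0
  · subst h0; simp
  · have hw0 : 0 < w.val := by
      rcases Nat.eq_zero_or_pos w.val with h | h
      · exact absurd ((ZMod.val_eq_zero w).1 h) h0
      · exact h
    have key : z - w = z + ((N - w.val : ℕ) : ZMod N) := by
      have h2 : ((N - w.val : ℕ) : ZMod N) = -w := by
        calc ((N - w.val : ℕ) : ZMod N)
            = ((N : ℕ) : ZMod N) - ((w.val : ℕ) : ZMod N) := Nat.cast_sub hw.le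
          _ = -w := by rw [ZMod.natCast_self, ZMod.natCast_rightInverse w]; ring
      rw [h2]; ring
    rw [key, ZMod.val_add, ZMod.val_cast_of_lt (by omega)]
    rcases le_or_gt w.val z.val with h | h
    · have e : z.val + (N - w.val) = (z.val - w.val) + N := by omega
      rw [if_pos h, e, Nat.add_mod_right, Nat.mod_eq_of_lt (by omega)]
    · rw [if_neg (by omega), Nat.mod_eq_of_lt (by omega)]; omega

lemma val_inj' (hN : 0 < N) {x y : ZMod N} (h : x.val = y.val) : x = y := by
  haveI : NeZero N := ⟨by omega⟩
  exact ZMod.val_injective N h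

lemma sub_inj_left (hN : 0 < N) {a c c' : ZMod N}
    (h : (c - a).val = (c' - a).val) : c = c' :=
  sub_left_inj.1 (val_inj' hN h)

lemma sub_inj_right (hN : 0 < N) {a d d' : ZMod N}
    (h : (a - d).val = (a - d').val) : d = d' :=
  sub_right_inj.1 (val_inj' hN h)

lemma sbtw_iff (hN : 0 < N) (p x q : ZMod N) :
    Sbtw N p x q ↔ ((p.val < x.val ∧ x.val < q.val) ∨ (q.val < p.val ∧ p.val < x.val) ∨
      (x.val < q.val ∧ q.val < p.val)) := by
  haveI : NeZero N := ⟨by omega⟩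
  have hp := ZMod.val_lt p; have hx := ZMod.val_lt x; have hq := ZMod.val_lt q
  unfold Sbtw
  rw [sub_val hN, sub_val hN]
  split_ifs <;> omega

lemma sides_disjoint (hN : 0 < N) {a b u : ZMod N}
    (h1 : Sbtw N a u b) (h2 : Sbtw N b u a) : False := by
  rw [sbtw_iff hN] at h1 h2; omega

lemma not_sbtw_self_left (a b : ZMod N) : ¬ Sbtw N a a b := by
  intro h
  have := h.1
  simp [sub_self] at this

lemma not_sbtw_self_right (a b : ZMod N) : ¬ Sbtw N a b b := by
  intro h
  exact lt_irrefl _ h.2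

lemma side1_ne_a (hN : 0 < N) {a b u : ZMod N} (h : Sbtw N a u b) : u ≠ a := by
  rintro rfl; exact not_sbtw_self_left _ _ h

lemma side1_ne_b (hN : 0 < N) {a b u : ZMod N} (h : Sbtw N a u b) : u ≠ b := by
  rintro rfl; exact not_sbtw_self_right _ _ h

lemma side2_ne_a (hN : 0 < N) {a b u : ZMod N} (h : Sbtw N b u a) : u ≠ a := by
  rintro rfl; exact not_sbtw_self_right _ _ h

lemma side2_ne_b (hN : 0 < N) {a b u : ZMod N} (h : Sbtw N b u a) : u ≠ b := by
  rintro rfl; exact not_sbtw_self_left _ _ h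

lemma cross_of_sides (hN : 0 < N) {a b u v : ZMod N}
    (h1 : Sbtw N a u b) (h2 : Sbtw N b v a) : Crosses N s(u, v) s(a, b) := by
  refine ⟨u, v, b, a, rfl, Sym2.eq_swap.symm, ?_, ?_⟩ <;>
    (rw [sbtw_iff hN] at h1 h2 ⊢; omega)

lemma cross_gamma_iff (hN : 0 < N) {a b : ZMod N} (e : Sym2 (ZMod N)) :
    Crosses N e s(a, b) ↔ ∃ c d, e = s(c, d) ∧ Sbtw N a c b ∧ Sbtw N b d a := by
  constructor
  · rintro ⟨p, q, u, v, rfl, hf, h1, h2⟩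
    rcases Sym2.eq_iff.1 hf with ⟨h3, h4⟩ | ⟨h3, h4⟩
    · subst h3; subst h4
      refine ⟨q, p, Sym2.eq_swap, ?_, ?_⟩ <;> (rw [sbtw_iff hN] at h1 h2 ⊢; omega)
    · subst h3; subst h4
      refine ⟨p, q, rfl, ?_, ?_⟩ <;> (rw [sbtw_iff hN] at h1 h2 ⊢; omega)
  · rintro ⟨c, d, rfl, h1, h2⟩
    exact cross_of_sides hN h1 h2

lemma canon_unique (hN : 0 < N) {a b c d c' d' : ZMod N}
    (h : s(c, d) = s(c', d')) (hc : Sbtw N a c b) (hd : Sbtw N b d a)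
    (hc' : Sbtw N a c' b) (hd' : Sbtw N b d' a) : c = c' ∧ d = d' := by
  rcases Sym2.eq_iff.1 h with ⟨h1, h2⟩ | ⟨h1, h2⟩
  · exact ⟨h1, h2⟩
  · subst h1; subst h2
    exact absurd hc (fun hc => sides_disjoint hN hc hd')

lemma cb_irrefl (hN : 0 < N) {a b : ZMod N} (e : Sym2 (ZMod N)) :
    ¬ CrossBefore N a b e e := by
  rintro ⟨c, d, c', d', he, he', hc, hd, hc', hd', h1, h2, h3⟩
  obtain ⟨rfl, rfl⟩ := canon_unique hN (he.symm.trans he') hc hd hc' hd'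
  omega

lemma cb_trans (hN : 0 < N) {a b : ZMod N} {e f g : Sym2 (ZMod N)}
    (h1 : CrossBefore N a b e f) (h2 : CrossBefore N a b f g) : CrossBefore N a b e g := by
  obtain ⟨c1, d1, c2, d2, he, hf, hc1, hd1, hc2, hd2, p1, p2, p3⟩ := h1
  obtain ⟨c3, d3, c4, d4, hf2, hg, hc3, hd3, hc4, hd4, q1, q2, q3⟩ := h2
  obtain ⟨rfl, rfl⟩ := canon_unique hN (hf.symm.trans hf2) hc2 hd2 hc3 hd3
  exact ⟨c1, d1, c4, d4, he, hg, hc1, hd1, hc4, hd4, le_trans p1 q1, le_trans p2 q2, by omega⟩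

lemma val_add_one (hN : 4 ≤ N) (p : ZMod N) :
    (p + 1).val = if p.val + 1 = N then 0 else p.val + 1 := by
  haveI : NeZero N := ⟨by omega⟩
  haveI : Fact (1 < N) := ⟨by omega⟩
  have hp := ZMod.val_lt p
  rw [ZMod.val_add, ZMod.val_one]
  split_ifs with h
  · rw [h, Nat.mod_self]
  · rw [Nat.mod_eq_of_lt (by omega)]

lemma bdry_not_cross (hN : 4 ≤ N) {a b : ZMod N} {e : Sym2 (ZMod N)}
    (hb : IsBoundaryArc N e) : ¬ Crosses N e s(a, b) := by
  have hN0 : 0 < N := by omega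
  haveI : NeZero N := ⟨by omega⟩
  intro hc
  obtain ⟨p, rfl⟩ := hb
  obtain ⟨c, d, h, hcb, hdb⟩ := (cross_gamma_iff hN0 _).1 hc
  have hp := ZMod.val_lt p; have ha := ZMod.val_lt a; have hb' := ZMod.val_lt b
  have h1 := val_add_one hN p
  rcases Sym2.eq_iff.1 h with ⟨h2, h3⟩ | ⟨h2, h3⟩ <;> subst h2 <;> subst h3 <;>
    rw [sbtw_iff hN0] at hcb hdb <;> split_ifs at h1 <;> omega

lemma not_isArc_diag_self (hN : 4 ≤ N) (u : ZMod N) : ¬ IsArc N s(u, u) := by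
  haveI : Fact (1 < N) := ⟨by omega⟩
  rintro (⟨p, q, h, hpq, _, _⟩ | ⟨p, h⟩)
  · rcases Sym2.eq_iff.1 h with ⟨h1, h2⟩ | ⟨h1, h2⟩
    exacts [hpq (h1.symm.trans h2), hpq (h2.symm.trans h1)]
  · rcases Sym2.eq_iff.1 h with ⟨h1, h2⟩ | ⟨h1, h2⟩
    exacts [one_ne_zero (left_eq_add.1 (h1.symm.trans h2)),
      one_ne_zero (left_eq_add.1 (h2.symm.trans h1))]

end Aux

section Path
variable {N : ℕ} {T : Finset (Sym2 (ZMod N))} {a b : ZMod N} {α : List (OArc N)}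

lemma len_pos (hα : IsTGPath N T a b α) : 0 < α.length :=
  List.length_pos_iff.2 hα.1.1

lemma first_fst (hα : IsTGPath N T a b α) : (α.get ⟨0, len_pos hα⟩).1 = a := by
  obtain ⟨y, t, rfl⟩ := List.exists_cons_of_ne_nil hα.1.1
  have h := hα.1.2.2.1
  simp only [List.head?, Option.map_some] at h
  exact Option.some.inj h

lemma last_snd (hα : IsTGPath N T a b α) :
    (α.get ⟨α.length - 1, by have := len_pos hα; omega⟩).2 = b := by
  have h := hα.1.2.2.2.1
  rw [List.getLast?_eq_getElem?, List.getElem?_eq_getElem (by have := len_pos hα; omega)] at h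
  simp only [Option.map_some] at h
  exact Option.some.inj h

lemma chain_fst (hα : IsTGPath N T a b α) (i : ℕ) (h : i + 1 < α.length) :
    (α.get ⟨i + 1, h⟩).1 = (α.get ⟨i, by omega⟩).2 :=
  List.isChain_iff_getElem.1 hα.1.2.2.2.2 i (by omega)

lemma red (hα : IsTGPath N T a b α) (i : ℕ) (h : i + 1 < α.length) :
    α.get ⟨i + 1, h⟩ ≠ ((α.get ⟨i, by omega⟩).2, (α.get ⟨i, by omega⟩).1) :=
  List.isChain_iff_getElem.1 hα.2.1 i (by omega)

lemma arc_isArc (hT : IsTriangulation N T) (hα : IsTGPath N T a b α)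
    (i : Fin α.length) : IsArc N (Sym2.mk.uncurry (α.get i)) := by
  rcases hα.1.2.1 _ (List.get_mem α i) with h | h
  · exact Or.inl (hT.diag _ h)
  · exact Or.inr h

lemma step_ne (hN : 4 ≤ N) (hT : IsTriangulation N T) (hα : IsTGPath N T a b α)
    (i : Fin α.length) : (α.get i).1 ≠ (α.get i).2 := by
  intro h
  have h2 := arc_isArc hT hα i
  have h5 : α.get i = ((α.get i).1, (α.get i).2) := rfl
  rw [h] at h5
  have h6 := congrArg Sym2.mk.uncurry h5
  exact not_isArc_diag_self hN _ (h6 ▸ h2)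

lemma even_canon (hN : 4 ≤ N) (hα : IsTGPath N T a b α) (i : ℕ)
    (hi : i < α.length) (hpar : i % 2 = 1) :
    Sym2.mk.uncurry (α.get ⟨i, hi⟩) ∈ T ∧
      ∃ c d, Sym2.mk.uncurry (α.get ⟨i, hi⟩) = s(c, d) ∧ Sbtw N a c b ∧ Sbtw N b d a := by
  obtain ⟨hT', hcr⟩ := hα.2.2.2.1 i hi hpar
  exact ⟨hT', (cross_gamma_iff (by omega) _).1 hcr⟩

lemma flank (hN : 4 ≤ N) (hα : IsTGPath N T a b α)
    (i : ℕ) (h0 : 0 < i) (hpar : i % 2 = 0) (hi : i + 1 < α.length)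
    (hcr : Crosses N (Sym2.mk.uncurry (α.get ⟨i, by omega⟩)) s(a, b)) :
    CrossBefore N a b (Sym2.mk.uncurry (α.get ⟨i - 1, by omega⟩)) (Sym2.mk.uncurry (α.get ⟨i, by omega⟩)) ∧
    CrossBefore N a b (Sym2.mk.uncurry (α.get ⟨i, by omega⟩)) (Sym2.mk.uncurry (α.get ⟨i + 1, hi⟩)) := by
  have hN0 : 0 < N := by omega
  obtain ⟨i', rfl⟩ : ∃ i', i = i' + 1 := ⟨i - 1, by omega⟩
  have hi' : i' < α.length := by omega
  have hi1 : i' + 1 < α.length := by omega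
  have hi2 : i' + 2 < α.length := by omega
  simp only [Nat.add_sub_cancel]
  have hch1 : (α.get ⟨i' + 1, hi1⟩).1 = (α.get ⟨i', hi'⟩).2 := chain_fst hα i' hi1
  have hch2 : (α.get ⟨i' + 2, hi2⟩).1 = (α.get ⟨i' + 1, hi1⟩).2 := by
    have := chain_fst hα (i' + 1) (by omega)
    exact this
  have hred1 := red hα i' hi1
  have hred2 : α.get ⟨i' + 2, hi2⟩ ≠ ((α.get ⟨i' + 1, hi1⟩).2, (α.get ⟨i' + 1, hi1⟩).1) := by
    have := red hα (i' + 1) (by omega)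
    exact this
  have hQ2P1 : (α.get ⟨i' + 1, hi1⟩).2 ≠ (α.get ⟨i', hi'⟩).1 :=
    fun h => hred1 (Prod.ext hch1 h)
  have hR2Q1 : (α.get ⟨i' + 2, hi2⟩).2 ≠ (α.get ⟨i' + 1, hi1⟩).1 :=
    fun h => hred2 (Prod.ext hch2 h)
  obtain ⟨c1, d1, c2, d2, hP, hR, hc1, hd1, hc2, hd2, le1, le2, lst⟩ :=
    hα.2.2.2.2.2 i' (i' + 2) hi' hi2 (by omega) (by omega) (by omega)
  obtain ⟨ce, de, hQ, hce, hde⟩ := (cross_gamma_iff hN0 _).1 hcr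
  have hPp : Sym2.mk.uncurry (α.get ⟨i', hi'⟩) = s((α.get ⟨i', hi'⟩).1, (α.get ⟨i', hi'⟩).2) := rfl
  have hQp : Sym2.mk.uncurry (α.get ⟨i' + 1, hi1⟩) =
      s((α.get ⟨i' + 1, hi1⟩).1, (α.get ⟨i' + 1, hi1⟩).2) := rfl
  have hRp : Sym2.mk.uncurry (α.get ⟨i' + 2, hi2⟩) =
      s((α.get ⟨i' + 2, hi2⟩).1, (α.get ⟨i' + 2, hi2⟩).2) := rfl
  rcases Sym2.eq_iff.1 (hPp.symm.trans hP) with ⟨e1, e2⟩ | ⟨e1, e2⟩ <;>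
    rcases Sym2.eq_iff.1 (hQp.symm.trans hQ) with ⟨f1, f2⟩ | ⟨f1, f2⟩
  · -- P.1 = c1, P.2 = d1 ; Q.1 = ce (impossible: ce = d1)
    have hced : ce = d1 := f1.symm.trans (hch1.trans e2)
    exact absurd (hced ▸ hce) (fun hx => sides_disjoint hN0 hx hd1)
  · -- P.1 = c1, P.2 = d1 ; Q.1 = de, Q.2 = ce
    have hde1 : de = d1 := f1.symm.trans (hch1.trans e2)
    rcases Sym2.eq_iff.1 (hRp.symm.trans hR) with ⟨g1, g2⟩ | ⟨g1, g2⟩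
    · -- R.1 = c2, R.2 = d2
      have hcec2 : ce = c2 := f2.symm.trans (hch2.symm.symm ▸ g1)
      -- ce = Q.2 = R.1 = c2
      have hcec2' : ce = c2 := f2.symm.trans ((hch2.symm).trans g1)
      have hne : c1 ≠ c2 := by
        intro h
        apply hQ2P1
        rw [f2, hcec2', ← h, ← e1]
      constructor
      · refine ⟨c1, d1, ce, de, hP, hQ, hc1, hd1, hce, hde, ?_, ?_, ?_⟩
        · rw [hcec2']; exact le1
        · rw [hde1]
        · left
          rw [hcec2']
          exact lt_of_le_of_ne le1 (fun h => hne (sub_inj_left hN0 h))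
      · refine ⟨ce, de, c2, d2, hQ, hR, hce, hde, hc2, hd2, ?_, ?_, ?_⟩
        · rw [hcec2']
        · rw [hde1]; exact le2
        · right
          rw [hde1]
          have hne2 : d1 ≠ d2 := by
            intro h
            apply hR2Q1
            rw [g2, f1, hde1, h]
          exact lt_of_le_of_ne le2 (fun h => hne2 (sub_inj_right hN0 h))
    · -- R.1 = d2 : then ce = Q.2 = R.1 = d2, contradiction
      have : ce = d2 := f2.symm.trans ((hch2.symm).trans g1)
      exact absurd (this ▸ hce) (fun hx => sides_disjoint hN0 hx hd2)
  · -- P.1 = d1, P.2 = c1 ; Q.1 = ce, Q.2 = de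
    have hcec1 : ce = c1 := f1.symm.trans (hch1.trans e2)
    rcases Sym2.eq_iff.1 (hRp.symm.trans hR) with ⟨g1, g2⟩ | ⟨g1, g2⟩
    · -- R.1 = c2 : then de = Q.2 = R.1 = c2, contradiction
      have : de = c2 := f2.symm.trans ((hch2.symm).trans g1)
      exact absurd (this ▸ hde) (fun hx => sides_disjoint hN0 hc2 hx)
    · -- R.1 = d2, R.2 = c2
      have hded2 : de = d2 := f2.symm.trans ((hch2.symm).trans g1)
      have hne : d1 ≠ d2 := by
        intro h
        apply hQ2P1
        rw [f2, hded2, ← h, ← e1]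
      constructor
      · refine ⟨c1, d1, ce, de, hP, hQ, hc1, hd1, hce, hde, ?_, ?_, ?_⟩
        · rw [hcec1]
        · rw [hded2]; exact le2
        · right
          rw [hded2]
          exact lt_of_le_of_ne le2 (fun h => hne (sub_inj_right hN0 h))
      · refine ⟨ce, de, c2, d2, hQ, hR, hce, hde, hc2, hd2, ?_, ?_, ?_⟩
        · rw [hcec1]; exact le1
        · rw [hded2]
        · left
          rw [hcec1]
          have hne2 : c1 ≠ c2 := by
            intro h
            apply hR2Q1
            rw [g2, f1, hcec1, h]
          exact lt_of_le_of_ne le1 (fun h => hne2 (sub_inj_left hN0 h))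
  · -- P.2 = c1 ; Q.1 = de : de = c1 contradiction
    have : de = c1 := f1.symm.trans (hch1.trans e2)
    exact absurd (this ▸ hde) (fun hx => sides_disjoint hN0 hc1 hx)

end Path

section Path2
variable {N : ℕ} {T : Finset (Sym2 (ZMod N))} {a b : ZMod N} {α : List (OArc N)}

lemma cross_fst_ne (hN0 : 0 < N) {a b u v : ZMod N} (hcr : Crosses N s(u, v) s(a, b)) :
    u ≠ a ∧ v ≠ a ∧ u ≠ b ∧ v ≠ b := by
  obtain ⟨c, d, heq, hc, hd⟩ := (cross_gamma_iff hN0 _).1 hcr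
  rcases Sym2.eq_iff.1 heq with ⟨rfl, rfl⟩ | ⟨rfl, rfl⟩
  · exact ⟨side1_ne_a hN0 hc, side2_ne_a hN0 hd, side1_ne_b hN0 hc, side2_ne_b hN0 hd⟩
  · exact ⟨side2_ne_a hN0 hd, side1_ne_a hN0 hc, side2_ne_b hN0 hd, side1_ne_b hN0 hc⟩

lemma cross_interior (hN : 4 ≤ N) (hα : IsTGPath N T a b α) (i : ℕ) (hi : i < α.length)
    (hcr : Crosses N (Sym2.mk.uncurry (α.get ⟨i, hi⟩)) s(a, b)) : 0 < i ∧ i + 1 < α.length := by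
  have hN0 : 0 < N := by omega
  have h4 := cross_fst_ne hN0 (u := (α.get ⟨i, hi⟩).1) (v := (α.get ⟨i, hi⟩).2) hcr
  constructor
  · rcases Nat.eq_zero_or_pos i with h | h
    · subst h
      exact absurd (first_fst hα) h4.1
    · exact h
  · by_contra hend
    have hieq : i = α.length - 1 := by omega
    subst hieq
    exact absurd (last_snd hα) h4.2.2.2

lemma cross_once (hN : 4 ≤ N) (hα : IsTGPath N T a b α) {E : Sym2 (ZMod N)}
    (hcr : Crosses N E s(a, b)) (i j : ℕ) (hi : i < α.length) (hj : j < α.length)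
    (hie : Sym2.mk.uncurry (α.get ⟨i, hi⟩) = E) (hje : Sym2.mk.uncurry (α.get ⟨j, hj⟩) = E) : i = j := by
  have hN0 : 0 < N := by omega
  have key : ∀ i j (hi : i < α.length) (hj : j < α.length),
      Sym2.mk.uncurry (α.get ⟨i, hi⟩) = E → Sym2.mk.uncurry (α.get ⟨j, hj⟩) = E → i < j → False := by
    intro i j hi hj hie hje hlt
    have hcri : Crosses N (Sym2.mk.uncurry (α.get ⟨i, hi⟩)) s(a, b) := by rw [hie]; exact hcr
    have hcrj : Crosses N (Sym2.mk.uncurry (α.get ⟨j, hj⟩)) s(a, b) := by rw [hje]; exact hcr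
    rcases Nat.mod_two_eq_zero_or_one i with hpi | hpi <;>
      rcases Nat.mod_two_eq_zero_or_one j with hpj | hpj
    · -- even, even
      obtain ⟨hi0, hi1⟩ := cross_interior hN hα i hi hcri
      obtain ⟨hj0, hj1⟩ := cross_interior hN hα j hj hcrj
      have fi := (flank hN hα i hi0 hpi hi1 hcri).2
      have fj := (flank hN hα j hj0 hpj hj1 hcrj).1
      have c1 : CrossBefore N a b E (Sym2.mk.uncurry (α.get ⟨i + 1, hi1⟩)) := by
        rw [← hie]; exact fi
      have c2 : CrossBefore N a b (Sym2.mk.uncurry (α.get ⟨j - 1, by omega⟩)) E := by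
        rw [← hje]; exact fj
      rcases eq_or_lt_of_le (show i + 1 ≤ j - 1 by omega) with heq | hlt2
      · have hfe : (⟨i + 1, hi1⟩ : Fin α.length) = ⟨j - 1, by omega⟩ := Fin.ext heq
        rw [hfe] at c1
        exact cb_irrefl hN0 E (cb_trans hN0 c1 c2)
      · have hmid := hα.2.2.2.2.2 (i + 1) (j - 1) hi1 (by omega)
          (by omega) (by omega) hlt2
        exact cb_irrefl hN0 E (cb_trans hN0 (cb_trans hN0 c1 hmid) c2)
    · -- even i, odd j
      obtain ⟨hi0, hi1⟩ := cross_interior hN hα i hi hcri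
      have fi := (flank hN hα i hi0 hpi hi1 hcri).2
      have c1 : CrossBefore N a b E (Sym2.mk.uncurry (α.get ⟨i + 1, hi1⟩)) := by
        rw [← hie]; exact fi
      rcases eq_or_lt_of_le (show i + 1 ≤ j by omega) with heq | hlt2
      · have hfe : (⟨i + 1, hi1⟩ : Fin α.length) = ⟨j, hj⟩ := Fin.ext heq
        rw [hfe, hje] at c1
        exact cb_irrefl hN0 E c1
      · have hmid := hα.2.2.2.2.2 (i + 1) j hi1 hj (by omega) hpj hlt2
        rw [hje] at hmid
        exact cb_irrefl hN0 E (cb_trans hN0 c1 hmid)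
    · -- odd i, even j
      obtain ⟨hj0, hj1⟩ := cross_interior hN hα j hj hcrj
      have fj := (flank hN hα j hj0 hpj hj1 hcrj).1
      have c2 : CrossBefore N a b (Sym2.mk.uncurry (α.get ⟨j - 1, by omega⟩)) E := by
        rw [← hje]; exact fj
      rcases eq_or_lt_of_le (show i ≤ j - 1 by omega) with heq | hlt2
      · have hfe : (⟨i, hi⟩ : Fin α.length) = ⟨j - 1, by omega⟩ := Fin.ext heq
        rw [← hfe, hie] at c2
        exact cb_irrefl hN0 E c2
      · have hmid := hα.2.2.2.2.2 i (j - 1) hi (by omega) hpi (by omega) hlt2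
        rw [hie] at hmid
        exact cb_irrefl hN0 E (cb_trans hN0 hmid c2)
    · -- odd, odd
      exact hα.2.2.2.2.1 i j hi hj hpi hpj (by omega) (hie.trans hje.symm)
  rcases lt_trichotomy i j with h | h | h
  · exact absurd (key i j hi hj hie hje h) (fun x => x)
  · exact h
  · exact absurd (key j i hj hi hje hie h) (fun x => x)

noncomputable def cnt (α : List (OArc N)) (par : ℕ) (E : Sym2 (ZMod N)) : ℕ :=
  ((Finset.univ : Finset (Fin α.length)).filter
    (fun i => i.1 % 2 = par ∧ Sym2.mk.uncurry (α.get i) = E)).card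

lemma cnt_pos_iff (α : List (OArc N)) (par : ℕ) (E : Sym2 (ZMod N)) :
    0 < cnt α par E ↔ ∃ i : Fin α.length, i.1 % 2 = par ∧ Sym2.mk.uncurry (α.get i) = E := by
  unfold cnt
  rw [Finset.card_pos]
  constructor
  · rintro ⟨i, hi⟩
    rw [Finset.mem_filter] at hi
    exact ⟨i, hi.2⟩
  · rintro ⟨i, hi⟩
    exact ⟨i, Finset.mem_filter.2 ⟨Finset.mem_univ i, hi⟩⟩

lemma cnt_cross_le_one (hN : 4 ≤ N) (hα : IsTGPath N T a b α) {E : Sym2 (ZMod N)}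
    (hcr : Crosses N E s(a, b)) : cnt α 0 E + cnt α 1 E ≤ 1 := by
  classical
  set s := Finset.univ.filter (fun i : Fin α.length => Sym2.mk.uncurry (α.get i) = E) with hs
  have hcard : s.card ≤ 1 := by
    rw [Finset.card_le_one]
    intro x hx y hy
    rw [hs, Finset.mem_filter] at hx hy
    exact Fin.ext (cross_once hN hα hcr x.1 y.1 x.2 y.2 hx.2 hy.2)
  have h0 : cnt α 0 E = (s.filter (fun i => i.1 % 2 = 0)).card := by
    unfold cnt
    congr 1
    ext i
    simp only [Finset.mem_filter, Finset.mem_univ, true_and, hs]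
    tauto
  have h1 : cnt α 1 E = (s.filter (fun i => ¬ i.1 % 2 = 0)).card := by
    unfold cnt
    congr 1
    ext i
    simp only [Finset.mem_filter, Finset.mem_univ, true_and, hs]
    constructor
    · rintro ⟨hp, he⟩; exact ⟨he, by omega⟩
    · rintro ⟨he, hp⟩; exact ⟨by omega, he⟩
  have hpart := Finset.card_filter_add_card_filter_not
    (s := s) (p := fun i => i.1 % 2 = 0)
  omega

lemma cnt_odd_zero (hα : IsTGPath N T a b α) {E : Sym2 (ZMod N)}
    (hnc : ¬ Crosses N E s(a, b)) : cnt α 1 E = 0 := by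
  unfold cnt
  rw [Finset.card_eq_zero, Finset.filter_eq_empty_iff]
  rintro i _ ⟨hpar, hE⟩
  exact hnc (hE ▸ (hα.2.2.2.1 i.1 i.2 hpar).2)

lemma cnt_nonarc_zero (hT : IsTriangulation N T) (hα : IsTGPath N T a b α)
    {E : Sym2 (ZMod N)} (h : ¬ IsArc N E) (par : ℕ) : cnt α par E = 0 := by
  unfold cnt
  rw [Finset.card_eq_zero, Finset.filter_eq_empty_iff]
  rintro i _ ⟨hpar, hE⟩
  exact h (hE ▸ arc_isArc hT hα i)

end Path2

lemma prodX_monomial {σ : Type*} [DecidableEq σ] (M : Multiset σ) :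
    (M.map (MvPolynomial.X (R := ℚ))).prod
      = MvPolynomial.monomial (Multiset.toFinsupp M) 1 := by
  induction M using Multiset.induction_on with
  | empty =>
      simp only [Multiset.map_zero, Multiset.prod_zero, map_zero,
        MvPolynomial.monomial_zero', map_one]
  | cons a s ih =>
      rw [Multiset.map_cons, Multiset.prod_cons, ih, ← Multiset.singleton_add, map_add,
        Multiset.toFinsupp_singleton,
        show (MvPolynomial.X a : MvPolynomial σ ℚ)
          = MvPolynomial.monomial (Finsupp.single a 1) 1 from rfl,
        MvPolynomial.monomial_mul, one_mul]

section Alg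
variable {N : ℕ} {T : Finset (Sym2 (ZMod N))} {a b : ZMod N}

lemma count_map_cnt (hN : 4 ≤ N) (hT : IsTriangulation N T)
    {γl : List (OArc N)} (hγl : IsTGPath N T a b γl) (par : ℕ) (E : Sym2 (ZMod N))
    (hE : IsArc N E) :
    Multiset.count (⟨E, hE⟩ : {e : Sym2 (ZMod N) // IsArc N e})
      ((Finset.univ.filter (fun i : Fin γl.length => i.1 % 2 = par)).val.map
        (fun i => (⟨Sym2.mk.uncurry (γl.get i), arc_isArc hT hγl i⟩ : {e : Sym2 (ZMod N) // IsArc N e})))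
      = cnt γl par E := by
  classical
  rw [Multiset.count_map]
  have h1 : Multiset.filter
      (fun i => (⟨E, hE⟩ : {e : Sym2 (ZMod N) // IsArc N e})
        = ⟨Sym2.mk.uncurry (γl.get i), arc_isArc hT hγl i⟩)
      (Finset.univ.filter (fun i : Fin γl.length => i.1 % 2 = par)).val
      = ((Finset.univ.filter (fun i : Fin γl.length => i.1 % 2 = par)).filter
          (fun i => Sym2.mk.uncurry (γl.get i) = E)).val := by
    rw [Finset.filter_val]
    apply Multiset.filter_congr
    intro i _
    rw [Subtype.ext_iff]
    exact eq_comm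
  rw [h1, ← Finset.card_def, Finset.filter_filter]
  rfl

lemma counts_eq (hN : 4 ≤ N) (hT : IsTriangulation N T)
    (x : Sym2 (ZMod N) →
      FractionRing (MvPolynomial {e : Sym2 (ZMod N) // IsArc N e} ℚ))
    (hx : ∀ e (he : IsArc N e),
      x e = algebraMap (MvPolynomial {e : Sym2 (ZMod N) // IsArc N e} ℚ) _
        (MvPolynomial.X ⟨e, he⟩))
    {α β : List (OArc N)} (hα : IsTGPath N T a b α) (hβ : IsTGPath N T a b β)
    (hval : pathValue N x α = pathValue N x β) :
    ∀ E, cnt α 0 E + cnt β 1 E = cnt β 0 E + cnt α 1 E := by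
  classical
  set R := MvPolynomial {e : Sym2 (ZMod N) // IsArc N e} ℚ with hR
  set φ := algebraMap R (FractionRing R) with hφ
  have hinj : Function.Injective φ := IsFractionRing.injective R (FractionRing R)
  -- multisets of variables
  have decomp : ∀ (γl : List (OArc N)) (hγl : IsTGPath N T a b γl),
      pathValue N x γl =
        φ ((((Finset.univ.filter (fun i : Fin γl.length => i.1 % 2 = 0)).val.map
              (fun i => (⟨Sym2.mk.uncurry (γl.get i), arc_isArc hT hγl i⟩ :
                {e : Sym2 (ZMod N) // IsArc N e}))).map MvPolynomial.X).prod) *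
        (φ ((((Finset.univ.filter (fun i : Fin γl.length => ¬ i.1 % 2 = 0)).val.map
              (fun i => (⟨Sym2.mk.uncurry (γl.get i), arc_isArc hT hγl i⟩ :
                {e : Sym2 (ZMod N) // IsArc N e}))).map MvPolynomial.X).prod))⁻¹ := by
    intro γl hγl
    unfold pathValue
    have step1 : ∀ i : Fin γl.length,
        (if (i : ℕ) % 2 = 0 then x (Sym2.mk.uncurry (γl.get i)) else (x (Sym2.mk.uncurry (γl.get i)))⁻¹)
          = (if (i : ℕ) % 2 = 0
              then φ (MvPolynomial.X ⟨Sym2.mk.uncurry (γl.get i), arc_isArc hT hγl i⟩)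
              else (φ (MvPolynomial.X ⟨Sym2.mk.uncurry (γl.get i), arc_isArc hT hγl i⟩))⁻¹) := by
      intro i
      rw [hx _ (arc_isArc hT hγl i)]
    rw [Finset.prod_congr rfl (fun i _ => step1 i), Finset.prod_ite
      (fun i => φ (MvPolynomial.X ⟨Sym2.mk.uncurry (γl.get i), arc_isArc hT hγl i⟩))
      (fun i => (φ (MvPolynomial.X ⟨Sym2.mk.uncurry (γl.get i), arc_isArc hT hγl i⟩))⁻¹)]
    rw [Finset.prod_inv_distrib]
    rw [← map_prod, ← map_prod]
    rw [Finset.prod_eq_multiset_prod, Finset.prod_eq_multiset_prod, Multiset.map_map,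
      Multiset.map_map]
    rfl
  have hA := decomp α hα
  have hB := decomp β hβ
  set MA0 := (Finset.univ.filter (fun i : Fin α.length => i.1 % 2 = 0)).val.map
      (fun i => (⟨Sym2.mk.uncurry (α.get i), arc_isArc hT hα i⟩ :
        {e : Sym2 (ZMod N) // IsArc N e})) with hMA0
  set MA1 := (Finset.univ.filter (fun i : Fin α.length => ¬ i.1 % 2 = 0)).val.map
      (fun i => (⟨Sym2.mk.uncurry (α.get i), arc_isArc hT hα i⟩ :
        {e : Sym2 (ZMod N) // IsArc N e})) with hMA1
  set MB0 := (Finset.univ.filter (fun i : Fin β.length => i.1 % 2 = 0)).val.map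
      (fun i => (⟨Sym2.mk.uncurry (β.get i), arc_isArc hT hβ i⟩ :
        {e : Sym2 (ZMod N) // IsArc N e})) with hMB0
  set MB1 := (Finset.univ.filter (fun i : Fin β.length => ¬ i.1 % 2 = 0)).val.map
      (fun i => (⟨Sym2.mk.uncurry (β.get i), arc_isArc hT hβ i⟩ :
        {e : Sym2 (ZMod N) // IsArc N e})) with hMB1
  rw [hval] at hA
  have hmul : φ ((MA0.map MvPolynomial.X).prod * (MB1.map MvPolynomial.X).prod)
      = φ ((MB0.map MvPolynomial.X).prod * (MA1.map MvPolynomial.X).prod) := by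
    rw [map_mul, map_mul]
    have h1 : φ ((MA1.map MvPolynomial.X).prod) ≠ 0 := by
      intro h
      have := hinj (h.trans (map_zero φ).symm)
      rw [prodX_monomial] at this
      exact one_ne_zero ((MvPolynomial.monomial_eq_zero).1 this)
    have h2 : φ ((MB1.map MvPolynomial.X).prod) ≠ 0 := by
      intro h
      have := hinj (h.trans (map_zero φ).symm)
      rw [prodX_monomial] at this
      exact one_ne_zero ((MvPolynomial.monomial_eq_zero).1 this)
    have h3 := hA.symm.trans hB
    rw [← div_eq_mul_inv, ← div_eq_mul_inv, div_eq_div_iff h1 h2] at h3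
    linear_combination h3
  have hpoly := hinj hmul
  rw [prodX_monomial, prodX_monomial, prodX_monomial, prodX_monomial,
    MvPolynomial.monomial_mul, MvPolynomial.monomial_mul, one_mul] at hpoly
  have hfin := MvPolynomial.monomial_left_injective (one_ne_zero (α := ℚ)) hpoly
  have hms : MA0 + MB1 = MB0 + MA1 := by
    apply (Multiset.toFinsupp (α := {e : Sym2 (ZMod N) // IsArc N e})).injective
    rw [map_add, map_add]
    exact hfin
  have hfil : ∀ n : ℕ, (Finset.univ.filter (fun i : Fin n => ¬ i.1 % 2 = 0))
      = (Finset.univ.filter (fun i : Fin n => i.1 % 2 = 1)) := by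
    intro n
    ext i
    simp only [Finset.mem_filter, Finset.mem_univ, true_and]
    omega
  rw [hMA0, hMA1, hMB0, hMB1, hfil, hfil] at hms
  intro E
  by_cases hE : IsArc N E
  · have hc := congrArg (Multiset.count (⟨E, hE⟩ : {e : Sym2 (ZMod N) // IsArc N e})) hms
    rw [Multiset.count_add, Multiset.count_add,
      count_map_cnt hN hT hα 0 E hE, count_map_cnt hN hT hα 1 E hE,
      count_map_cnt hN hT hβ 0 E hE, count_map_cnt hN hT hβ 1 E hE] at hc
    exact hc
  · rw [cnt_nonarc_zero hT hα hE 0, cnt_nonarc_zero hT hα hE 1,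
      cnt_nonarc_zero hT hβ hE 0, cnt_nonarc_zero hT hβ hE 1]
  
end Alg

lemma range_odd_card : ∀ n : ℕ, ((Finset.range n).filter (fun k => k % 2 = 1)).card = n / 2 := by
  intro n
  induction n with
  | zero => simp
  | succ m ih =>
    rw [Finset.range_add_one, Finset.filter_insert]
    split_ifs with h
    · rw [Finset.card_insert_of_notMem (by simp)]
      omega
    · omega

lemma fin_odd_card (n : ℕ) :
    ((Finset.univ : Finset (Fin n)).filter (fun i => i.1 % 2 = 1)).card = n / 2 := by
  rw [← range_odd_card n]
  apply Finset.card_nbij (fun i => i.1)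
  · intro i hi
    rw [Finset.mem_coe, Finset.mem_filter] at hi
    rw [Finset.mem_coe, Finset.mem_filter, Finset.mem_range]
    exact ⟨i.2, hi.2⟩
  · intro i _ j _ h
    exact Fin.ext h
  · intro k hk
    rw [Finset.mem_coe, Finset.mem_filter, Finset.mem_range] at hk
    exact ⟨⟨k, hk.1⟩, by rw [Finset.mem_coe, Finset.mem_filter]; exact ⟨Finset.mem_univ _, hk.2⟩, rfl⟩

section TwoPath
variable {N : ℕ} {T : Finset (Sym2 (ZMod N))} {a b : ZMod N} {α β : List (OArc N)}

lemma gamma_ab_ne (hγ : IsPolyDiag N s(a, b)) : a ≠ b := by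
  obtain ⟨p, q, h, hpq, _, _⟩ := hγ
  rcases Sym2.eq_iff.1 h with ⟨h1, h2⟩ | ⟨h1, h2⟩
  · rw [h1, h2]; exact hpq
  · rw [h1, h2]; exact fun h => hpq h.symm

lemma cnt_eq_of (hN : 4 ≤ N) (hα : IsTGPath N T a b α) (hβ : IsTGPath N T a b β)
    (hcnt : ∀ E, cnt α 0 E + cnt β 1 E = cnt β 0 E + cnt α 1 E) :
    ∀ E, cnt α 0 E = cnt β 0 E ∧ cnt α 1 E = cnt β 1 E := by
  intro E
  by_cases hcr : Crosses N E s(a, b)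
  · have h1 := cnt_cross_le_one hN hα hcr
    have h2 := cnt_cross_le_one hN hβ hcr
    have h3 := hcnt E
    omega
  · have h1 := cnt_odd_zero hα hcr
    have h2 := cnt_odd_zero hβ hcr
    have h3 := hcnt E
    omega

noncomputable def evenFinset (α : List (OArc N)) : Finset (Sym2 (ZMod N)) :=
  (Finset.univ.filter (fun i : Fin α.length => i.1 % 2 = 1)).image
    (fun i => Sym2.mk.uncurry (α.get i))

lemma mem_evenFinset_iff (α : List (OArc N)) (E : Sym2 (ZMod N)) :
    E ∈ evenFinset α ↔ 0 < cnt α 1 E := by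
  rw [cnt_pos_iff]
  unfold evenFinset
  rw [Finset.mem_image]
  constructor
  · rintro ⟨i, hi, he⟩
    exact ⟨i, (Finset.mem_filter.1 hi).2, he⟩
  · rintro ⟨i, hp, he⟩
    exact ⟨i, Finset.mem_filter.2 ⟨Finset.mem_univ _, hp⟩, he⟩

lemma evenFinset_card (hα : IsTGPath N T a b α) :
    (evenFinset α).card = α.length / 2 := by
  unfold evenFinset
  rw [Finset.card_image_of_injOn, fin_odd_card]
  intro i hi j hj he
  rw [Finset.mem_coe, Finset.mem_filter] at hi hj
  by_contra hne
  exact hα.2.2.2.2.1 i.1 j.1 i.2 j.2 hi.2 hj.2 (fun h => hne (Fin.ext h)) he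

lemma evenFinset_eq (hN : 4 ≤ N) (hα : IsTGPath N T a b α) (hβ : IsTGPath N T a b β)
    (hcnt : ∀ E, cnt α 0 E + cnt β 1 E = cnt β 0 E + cnt α 1 E) :
    evenFinset α = evenFinset β := by
  ext E
  rw [mem_evenFinset_iff, mem_evenFinset_iff, (cnt_eq_of hN hα hβ hcnt E).2]

lemma len_eq (hN : 4 ≤ N) (hα : IsTGPath N T a b α) (hβ : IsTGPath N T a b β)
    (hcnt : ∀ E, cnt α 0 E + cnt β 1 E = cnt β 0 E + cnt α 1 E) :
    α.length = β.length := by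
  have h1 := evenFinset_eq hN hα hβ hcnt
  have h2 := evenFinset_card hα
  have h3 := evenFinset_card hβ
  obtain ⟨k1, hk1⟩ := hα.2.2.1
  obtain ⟨k2, hk2⟩ := hβ.2.2.1
  rw [h1, h3] at h2
  omega

lemma evens_eq (hN : 4 ≤ N) (hα : IsTGPath N T a b α) (hβ : IsTGPath N T a b β)
    (hcnt : ∀ E, cnt α 0 E + cnt β 1 E = cnt β 0 E + cnt α 1 E) :
    ∀ i (h1 : i < α.length) (h2 : i < β.length), i % 2 = 1 →
      Sym2.mk.uncurry (α.get ⟨i, h1⟩) = Sym2.mk.uncurry (β.get ⟨i, h2⟩) := by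
  have hN0 : 0 < N := by omega
  have hEF := evenFinset_eq hN hα hβ hcnt
  intro i
  induction i using Nat.strong_induction_on with
  | _ i IH =>
  intro hi hi' hpar
  by_contra hne
  have he1 : Sym2.mk.uncurry (α.get ⟨i, hi⟩) ∈ evenFinset β := by
    rw [← hEF]
    exact Finset.mem_image.2 ⟨⟨i, hi⟩, Finset.mem_filter.2 ⟨Finset.mem_univ _, hpar⟩, rfl⟩
  obtain ⟨j, hjmem, hje⟩ := Finset.mem_image.1 he1
  have hjpar : j.1 % 2 = 1 := (Finset.mem_filter.1 hjmem).2
  have hji : j.1 ≠ i := by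
    intro h
    apply hne
    rw [← hje]
    exact congrArg (fun t => Sym2.mk.uncurry (β.get t)) (Fin.ext h)
  have he2 : Sym2.mk.uncurry (β.get ⟨i, hi'⟩) ∈ evenFinset α := by
    rw [hEF]
    exact Finset.mem_image.2 ⟨⟨i, hi'⟩, Finset.mem_filter.2 ⟨Finset.mem_univ _, hpar⟩, rfl⟩
  obtain ⟨j', hj'mem, hj'e⟩ := Finset.mem_image.1 he2
  have hj'par : j'.1 % 2 = 1 := (Finset.mem_filter.1 hj'mem).2
  have hj'i : j'.1 ≠ i := by
    intro h
    apply hne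
    rw [← hj'e]
    exact congrArg (fun t => Sym2.mk.uncurry (α.get t)) (Fin.ext h.symm)
  rcases lt_or_gt_of_ne hji with hlt | hgt
  · have hIH := IH j.1 hlt (by omega) j.2 hjpar
    apply hα.2.2.2.2.1 j.1 i (by omega) hi hjpar hpar hji
    rw [hIH]
    have hfe : (⟨j.1, j.2⟩ : Fin β.length) = j := Fin.ext rfl
    rw [hfe, hje]
  · rcases lt_or_gt_of_ne hj'i with hlt' | hgt'
    · have hIH := IH j'.1 hlt' j'.2 (by omega) hj'par
      apply hβ.2.2.2.2.1 j'.1 i (by omega) hi' hj'par hpar hj'i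
      rw [← hIH]
      have hfe : (⟨j'.1, j'.2⟩ : Fin α.length) = j' := Fin.ext rfl
      rw [hfe, hj'e]
    · have hcb1 := hβ.2.2.2.2.2 i j.1 hi' j.2 hpar hjpar hgt
      have hcb2 := hα.2.2.2.2.2 i j'.1 hi j'.2 hpar hj'par hgt'
      rw [hje] at hcb1
      rw [hj'e] at hcb2
      exact cb_irrefl hN0 _ (cb_trans hN0 hcb2 hcb1)

end TwoPath

section Final
variable {N : ℕ} {T : Finset (Sym2 (ZMod N))} {a b : ZMod N} {α β : List (OArc N)}

lemma cross_of_sides' (hN0 : 0 < N) {a b u v : ZMod N}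
    (h1 : Sbtw N b u a) (h2 : Sbtw N a v b) : Crosses N s(u, v) s(a, b) := by
  rw [show s(u, v) = s(v, u) from Sym2.eq_swap]
  exact cross_of_sides hN0 h2 h1

lemma sided_of_adj (hN : 4 ≤ N) (hα : IsTGPath N T a b α) (k : ℕ) (hk : k < α.length)
    (hpar : k % 2 = 1) :
    (Sbtw N a (α.get ⟨k, hk⟩).1 b ∨ Sbtw N b (α.get ⟨k, hk⟩).1 a) ∧
    (Sbtw N a (α.get ⟨k, hk⟩).2 b ∨ Sbtw N b (α.get ⟨k, hk⟩).2 a) := by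
  obtain ⟨_, c, d, harc, hc, hd⟩ := even_canon hN hα k hk hpar
  have hp : Sym2.mk.uncurry (α.get ⟨k, hk⟩) = s((α.get ⟨k, hk⟩).1, (α.get ⟨k, hk⟩).2) := rfl
  rcases Sym2.eq_iff.1 (hp.symm.trans harc) with ⟨h1, h2⟩ | ⟨h1, h2⟩
  · rw [h1, h2]; exact ⟨Or.inl hc, Or.inr hd⟩
  · rw [h1, h2]; exact ⟨Or.inr hd, Or.inl hc⟩

lemma crux (hN : 4 ≤ N) (hT : IsTriangulation N T)
    (hα : IsTGPath N T a b α) (hβ : IsTGPath N T a b β)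
    (hc0 : ∀ E, cnt α 0 E = cnt β 0 E)
    (hev : ∀ k (h1 : k < α.length) (h2 : k < β.length), k % 2 = 1 →
      Sym2.mk.uncurry (α.get ⟨k, h1⟩) = Sym2.mk.uncurry (β.get ⟨k, h2⟩))
    (hlen : α.length = β.length)
    (i : ℕ) (hi1 : i + 1 < α.length) (hpar : i % 2 = 0)
    (hfst : (α.get ⟨i, by omega⟩).1 = (β.get ⟨i, by omega⟩).1)
    (hcr : Crosses N (Sym2.mk.uncurry (α.get ⟨i, by omega⟩)) s(a, b)) :
    (α.get ⟨i, by omega⟩).2 = (β.get ⟨i, by omega⟩).2 := by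
  have hN0 : 0 < N := by omega
  have hiα : i < α.length := by omega
  have hiβ : i < β.length := by omega
  have h1 : 0 < cnt α 0 (Sym2.mk.uncurry (α.get ⟨i, hiα⟩)) :=
    (cnt_pos_iff _ _ _).2 ⟨⟨i, hiα⟩, hpar, rfl⟩
  have h2 : 0 < cnt β 0 (Sym2.mk.uncurry (α.get ⟨i, hiα⟩)) := by rw [← hc0]; exact h1
  obtain ⟨j, hjpar, hje⟩ := (cnt_pos_iff _ _ _).1 h2
  have hj2 : Sym2.mk.uncurry (β.get ⟨j.1, j.2⟩) = Sym2.mk.uncurry (α.get ⟨i, hiα⟩) := hje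
  have hcrj : Crosses N (Sym2.mk.uncurry (β.get ⟨j.1, j.2⟩)) s(a, b) := by rw [hj2]; exact hcr
  obtain ⟨hj0, hj1⟩ := cross_interior hN hβ j.1 j.2 hcrj
  obtain ⟨hi0, _⟩ := cross_interior hN hα i hiα hcr
  have fA := flank hN hα i hi0 hpar hi1 hcr
  have fB := flank hN hβ j.1 hj0 hjpar hj1 hcrj
  have hij : j.1 = i := by
    by_contra hne
    rcases lt_or_gt_of_ne hne with hlt | hgt
    · have c1 : CrossBefore N a b (Sym2.mk.uncurry (α.get ⟨i, hiα⟩))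
          (Sym2.mk.uncurry (β.get ⟨j.1 + 1, hj1⟩)) := by
        rw [← hj2]; exact fB.2
      have c2 : CrossBefore N a b (Sym2.mk.uncurry (β.get ⟨i - 1, by omega⟩))
          (Sym2.mk.uncurry (α.get ⟨i, hiα⟩)) := by
        have h3 := fA.1
        rw [hev (i - 1) (by omega) (by omega) (by omega)] at h3
        exact h3
      rcases eq_or_lt_of_le (show j.1 + 1 ≤ i - 1 by omega) with heq | hlt2
      · rw [show (⟨j.1 + 1, hj1⟩ : Fin β.length) = ⟨i - 1, by omega⟩ from Fin.ext heq] at c1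
        exact cb_irrefl hN0 _ (cb_trans hN0 c1 c2)
      · have hmid := hβ.2.2.2.2.2 (j.1 + 1) (i - 1) hj1 (by omega) (by omega) (by omega) hlt2
        exact cb_irrefl hN0 _ (cb_trans hN0 (cb_trans hN0 c1 hmid) c2)
    · have c1 : CrossBefore N a b (Sym2.mk.uncurry (α.get ⟨i, hiα⟩))
          (Sym2.mk.uncurry (β.get ⟨i + 1, by omega⟩)) := by
        have h3 := fA.2
        rw [hev (i + 1) hi1 (by omega) (by omega)] at h3
        exact h3
      have c2 : CrossBefore N a b (Sym2.mk.uncurry (β.get ⟨j.1 - 1, by omega⟩))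
          (Sym2.mk.uncurry (α.get ⟨i, hiα⟩)) := by
        rw [← hj2]; exact fB.1
      rcases eq_or_lt_of_le (show i + 1 ≤ j.1 - 1 by omega) with heq | hlt2
      · rw [show (⟨i + 1, by omega⟩ : Fin β.length) = ⟨j.1 - 1, by omega⟩
            from Fin.ext heq] at c1
        exact cb_irrefl hN0 _ (cb_trans hN0 c1 c2)
      · have hmid := hβ.2.2.2.2.2 (i + 1) (j.1 - 1) (by omega) (by omega)
          (by omega) (by omega) hlt2
        exact cb_irrefl hN0 _ (cb_trans hN0 (cb_trans hN0 c1 hmid) c2)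
  have hj3 : Sym2.mk.uncurry (β.get ⟨i, hiβ⟩) = Sym2.mk.uncurry (α.get ⟨i, hiα⟩) := by
    rw [← hj2]
    exact congrArg (fun t => Sym2.mk.uncurry (β.get t)) (Fin.ext hij.symm)
  have hβp : Sym2.mk.uncurry (β.get ⟨i, hiβ⟩) = s((β.get ⟨i, hiβ⟩).1, (β.get ⟨i, hiβ⟩).2) := rfl
  have hαp : Sym2.mk.uncurry (α.get ⟨i, hiα⟩) = s((α.get ⟨i, hiα⟩).1, (α.get ⟨i, hiα⟩).2) := rfl
  have hkey := (hβp.symm.trans hj3).trans hαp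
  rcases Sym2.eq_iff.1 hkey with ⟨h3, h4⟩ | ⟨h3, h4⟩
  · exact h4.symm
  · exact absurd (hfst.trans h3) (step_ne hN hT hα ⟨i, hiα⟩)

lemma snd_eq (hN : 4 ≤ N) (hT : IsTriangulation N T) (hγ : IsPolyDiag N s(a, b))
    (hα : IsTGPath N T a b α) (hβ : IsTGPath N T a b β)
    (hc0 : ∀ E, cnt α 0 E = cnt β 0 E)
    (hev : ∀ k (h1 : k < α.length) (h2 : k < β.length), k % 2 = 1 →
      Sym2.mk.uncurry (α.get ⟨k, h1⟩) = Sym2.mk.uncurry (β.get ⟨k, h2⟩))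
    (hlen : α.length = β.length)
    (i : ℕ) (hi1 : i + 1 < α.length) (hpar : i % 2 = 0)
    (hfst : (α.get ⟨i, by omega⟩).1 = (β.get ⟨i, by omega⟩).1) :
    (α.get ⟨i, by omega⟩).2 = (β.get ⟨i, by omega⟩).2 := by
  have hN0 : 0 < N := by omega
  have hiα : i < α.length := by omega
  have hiβ : i < β.length := by omega
  have hi1β : i + 1 < β.length := by omega
  by_cases hcr : Crosses N (Sym2.mk.uncurry (α.get ⟨i, hiα⟩)) s(a, b)
  · exact crux hN hT hα hβ hc0 hev hlen i hi1 hpar hfst hcr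
  by_cases hcr2 : Crosses N (Sym2.mk.uncurry (β.get ⟨i, hiβ⟩)) s(a, b)
  · have hev' : ∀ k (h1 : k < β.length) (h2 : k < α.length), k % 2 = 1 →
        Sym2.mk.uncurry (β.get ⟨k, h1⟩) = Sym2.mk.uncurry (α.get ⟨k, h2⟩) :=
      fun k h1 h2 hp => (hev k h2 h1 hp).symm
    exact (crux hN hT hβ hα (fun E => (hc0 E).symm) hev' hlen.symm i hi1β hpar
      hfst.symm hcr2).symm
  obtain ⟨_, c, d, harc1, hc, hd⟩ := even_canon hN hα (i + 1) hi1 (by omega)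
  have harc2 : Sym2.mk.uncurry (β.get ⟨i + 1, hi1β⟩) = s(c, d) := by
    rw [← hev (i + 1) hi1 hi1β (by omega)]; exact harc1
  have hch1 : (α.get ⟨i + 1, hi1⟩).1 = (α.get ⟨i, hiα⟩).2 := chain_fst hα i hi1
  have hch2 : (β.get ⟨i + 1, hi1β⟩).1 = (β.get ⟨i, hiβ⟩).2 := chain_fst hβ i hi1β
  have hw1 : (α.get ⟨i, hiα⟩).2 = c ∨ (α.get ⟨i, hiα⟩).2 = d := by
    have hp : Sym2.mk.uncurry (α.get ⟨i + 1, hi1⟩)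
        = s((α.get ⟨i + 1, hi1⟩).1, (α.get ⟨i + 1, hi1⟩).2) := rfl
    rcases Sym2.eq_iff.1 (hp.symm.trans harc1) with ⟨h1, _⟩ | ⟨h1, _⟩
    · exact Or.inl (hch1 ▸ h1)
    · exact Or.inr (hch1 ▸ h1)
  have hw2 : (β.get ⟨i, hiβ⟩).2 = c ∨ (β.get ⟨i, hiβ⟩).2 = d := by
    have hp : Sym2.mk.uncurry (β.get ⟨i + 1, hi1β⟩)
        = s((β.get ⟨i + 1, hi1β⟩).1, (β.get ⟨i + 1, hi1β⟩).2) := rfl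
    rcases Sym2.eq_iff.1 (hp.symm.trans harc2) with ⟨h1, _⟩ | ⟨h1, _⟩
    · exact Or.inl (hch2 ▸ h1)
    · exact Or.inr (hch2 ▸ h1)
  by_contra hne
  rcases Nat.eq_zero_or_pos i with hi0 | hi0
  · subst hi0
    have hua : (α.get ⟨0, hiα⟩).1 = a := first_fst hα
    have hub : (β.get ⟨0, hiβ⟩).1 = a := first_fst hβ
    have h1 : 0 < cnt α 0 (Sym2.mk.uncurry (α.get ⟨0, hiα⟩)) :=
      (cnt_pos_iff _ _ _).2 ⟨⟨0, hiα⟩, rfl, rfl⟩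
    have h2 : 0 < cnt β 0 (Sym2.mk.uncurry (α.get ⟨0, hiα⟩)) := by rw [← hc0]; exact h1
    obtain ⟨j, hjpar, hje⟩ := (cnt_pos_iff _ _ _).1 h2
    have hje' : Sym2.mk.uncurry (β.get ⟨j.1, j.2⟩) = Sym2.mk.uncurry (α.get ⟨0, hiα⟩) := hje
    have hj0 : j.1 = 0 := by
      by_contra hj0
      have hfstj : (β.get ⟨j.1, j.2⟩).1 = (β.get ⟨j.1 - 1, by omega⟩).2 := by
        have h3 := chain_fst hβ (j.1 - 1) (by omega)
        rw [show (⟨j.1 - 1 + 1, by omega⟩ : Fin β.length) = ⟨j.1, j.2⟩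
            from Fin.ext (show j.1 - 1 + 1 = j.1 by omega)] at h3
        exact h3
      have hsided1 := (sided_of_adj hN hβ (j.1 - 1) (by omega) (by omega)).2
      rw [← hfstj] at hsided1
      have he0 : Sym2.mk.uncurry (α.get ⟨0, hiα⟩) = s(a, (α.get ⟨0, hiα⟩).2) := by rw [← hua]; rfl
      have hp : Sym2.mk.uncurry (β.get ⟨j.1, j.2⟩)
          = s((β.get ⟨j.1, j.2⟩).1, (β.get ⟨j.1, j.2⟩).2) := rfl
      have hkey := (hp.symm.trans hje').trans he0
      rcases Sym2.eq_iff.1 hkey with ⟨h3, h4⟩ | ⟨h3, h4⟩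
      · rcases hsided1 with hs | hs
        · exact side1_ne_a hN0 hs h3
        · exact side2_ne_a hN0 hs h3
      · rcases eq_or_lt_of_le (show j.1 + 1 ≤ β.length by omega) with hend | hmore
        · have hlst : (β.get ⟨j.1, j.2⟩).2 = b := by
            have h5 := last_snd hβ
            rw [show (⟨β.length - 1, by omega⟩ : Fin β.length) = ⟨j.1, j.2⟩
                from Fin.ext (show β.length - 1 = j.1 by omega)] at h5
            exact h5
          exact gamma_ab_ne hγ (h4.symm.trans hlst)
        · have hsndj : (β.get ⟨j.1, j.2⟩).2 = (β.get ⟨j.1 + 1, hmore⟩).1 :=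
            (chain_fst hβ j.1 hmore).symm
          have hsided2 := (sided_of_adj hN hβ (j.1 + 1) hmore (by omega)).1
          rw [← hsndj] at hsided2
          rcases hsided2 with hs | hs
          · exact side1_ne_a hN0 hs h4
          · exact side2_ne_a hN0 hs h4
    have hj2 : Sym2.mk.uncurry (β.get ⟨0, hiβ⟩) = Sym2.mk.uncurry (α.get ⟨0, hiα⟩) := by
      rw [← hje']
      exact congrArg (fun t => Sym2.mk.uncurry (β.get t)) (Fin.ext hj0.symm)
    have hp1 : Sym2.mk.uncurry (β.get ⟨0, hiβ⟩)
        = s((β.get ⟨0, hiβ⟩).1, (β.get ⟨0, hiβ⟩).2) := rfl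
    have hp2 : Sym2.mk.uncurry (α.get ⟨0, hiα⟩)
        = s((α.get ⟨0, hiα⟩).1, (α.get ⟨0, hiα⟩).2) := rfl
    have hkey := (hp1.symm.trans hj2).trans hp2
    rcases Sym2.eq_iff.1 hkey with ⟨h3, h4⟩ | ⟨h3, h4⟩
    · exact hne h4.symm
    · rcases hw1 with hw | hw
      · have h5 : a = c := by rw [← hub, h3, hw]
        exact side1_ne_a hN0 hc h5.symm
      · have h5 : a = d := by rw [← hub, h3, hw]
        exact side2_ne_a hN0 hd h5.symm
  · have hfstu : (α.get ⟨i, hiα⟩).1 = (α.get ⟨i - 1, by omega⟩).2 := by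
      have h3 := chain_fst hα (i - 1) (by omega)
      rw [show (⟨i - 1 + 1, by omega⟩ : Fin α.length) = ⟨i, hiα⟩
          from Fin.ext (show i - 1 + 1 = i by omega)] at h3
      exact h3
    have hsided := (sided_of_adj hN hα (i - 1) (by omega) (by omega)).2
    rw [← hfstu] at hsided
    have hαp : Sym2.mk.uncurry (α.get ⟨i, hiα⟩)
        = s((α.get ⟨i, hiα⟩).1, (α.get ⟨i, hiα⟩).2) := rfl
    have hβp : Sym2.mk.uncurry (β.get ⟨i, hiβ⟩)
        = s((β.get ⟨i, hiβ⟩).1, (β.get ⟨i, hiβ⟩).2) := rfl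
    rcases hsided with hs | hs
    · rcases hw1 with hw | hw
      · rcases hw2 with hw' | hw'
        · exact hne (hw.trans hw'.symm)
        · apply hcr2
          rw [hβp, ← hfst, hw']
          exact cross_of_sides hN0 hs hd
      · apply hcr
        rw [hαp, hw]
        exact cross_of_sides hN0 hs hd
    · rcases hw1 with hw | hw
      · apply hcr
        rw [hαp, hw]
        exact cross_of_sides' hN0 hs hc
      · rcases hw2 with hw' | hw'
        · apply hcr2
          rw [hβp, ← hfst, hw']
          exact cross_of_sides' hN0 hs hc
        · exact hne (hw.trans hw'.symm)

lemma monomial_injective' (hN : 4 ≤ N)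
    (hT : IsTriangulation N T)
    (x : Sym2 (ZMod N) →
      FractionRing (MvPolynomial {e : Sym2 (ZMod N) // IsArc N e} ℚ))
    (hx : ∀ e (he : IsArc N e),
      x e = algebraMap (MvPolynomial {e : Sym2 (ZMod N) // IsArc N e} ℚ) _
        (MvPolynomial.X ⟨e, he⟩))
    (hγ : IsPolyDiag N s(a, b)) :
    ∀ α β : List (OArc N), IsTGPath N T a b α → IsTGPath N T a b β →
      pathValue N x α = pathValue N x β → α = β := by
  intro α β hα hβ hval
  have hN0 : 0 < N := by omega
  have hcnt := counts_eq hN hT x hx hα hβ hval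
  have hc0 : ∀ E, cnt α 0 E = cnt β 0 E := fun E => (cnt_eq_of hN hα hβ hcnt E).1
  have hlen := len_eq hN hα hβ hcnt
  have hev := evens_eq hN hα hβ hcnt
  have hfst : ∀ i (hi : i < α.length),
      (α.get ⟨i, hi⟩).1 = (β.get ⟨i, by omega⟩).1 := by
    intro i
    induction i with
    | zero =>
      intro hi
      exact (first_fst hα).trans (first_fst hβ).symm
    | succ i IH =>
      intro hi
      have hiα : i < α.length := by omega
      rw [chain_fst hα i hi, chain_fst hβ i (by omega)]
      rcases Nat.mod_two_eq_zero_or_one i with hpar | hpar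
      · exact snd_eq hN hT hγ hα hβ hc0 hev hlen i hi hpar (IH hiα)
      · have harc := hev i hiα (by omega) hpar
        have hf := IH hiα
        have hp1 : Sym2.mk.uncurry (α.get ⟨i, hiα⟩)
            = s((α.get ⟨i, hiα⟩).1, (α.get ⟨i, hiα⟩).2) := rfl
        have hp2 : Sym2.mk.uncurry (β.get ⟨i, (by omega : i < β.length)⟩)
            = s((β.get ⟨i, (by omega : i < β.length)⟩).1,
                (β.get ⟨i, (by omega : i < β.length)⟩).2) := rfl
        have hkey := (hp1.symm.trans harc).trans hp2
        rcases Sym2.eq_iff.1 hkey with ⟨h1, h2⟩ | ⟨h1, h2⟩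
        · exact h2
        · exact absurd (hf.trans h2.symm) (step_ne hN hT hα ⟨i, hiα⟩)
  have hsnd : ∀ i (hi : i < α.length),
      (α.get ⟨i, hi⟩).2 = (β.get ⟨i, by omega⟩).2 := by
    intro i hi
    rcases eq_or_lt_of_le (show i + 1 ≤ α.length by omega) with hend | hmore
    · have h1 : (α.get ⟨α.length - 1, by omega⟩).2 = b := last_snd hα
      have h2 : (β.get ⟨β.length - 1, by omega⟩).2 = b := last_snd hβ
      rw [show (⟨i, hi⟩ : Fin α.length) = ⟨α.length - 1, by omega⟩
          from Fin.ext (show i = α.length - 1 by omega),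
        show (⟨i, (by omega : i < β.length)⟩ : Fin β.length) = ⟨β.length - 1, by omega⟩
          from Fin.ext (show i = β.length - 1 by omega), h1, h2]
    · rw [← chain_fst hα i hmore, ← chain_fst hβ i (by omega)]
      exact hfst (i + 1) hmore
  apply List.ext_get hlen
  intro n h1 h2
  exact Prod.ext (hfst n h1) (hsnd n h1)

end Final


/-- **Proposition 3.3(c)** (polygon model): with `x(τ) = X_τ` for every arc `τ`
in the field of fractions of the polynomial ring over `ℚ` with one
indeterminate per arc, the map `α ↦ x(α)` is injective on `(T,γ)`-paths. -/
theorem monomial_injective (N : ℕ) (hN : 4 ≤ N)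
    (T : Finset (Sym2 (ZMod N))) (hT : IsTriangulation N T)
    (x : Sym2 (ZMod N) →
      FractionRing (MvPolynomial {e : Sym2 (ZMod N) // IsArc N e} ℚ))
    (hx : ∀ e (he : IsArc N e),
      x e = algebraMap (MvPolynomial {e : Sym2 (ZMod N) // IsArc N e} ℚ) _
        (MvPolynomial.X ⟨e, he⟩))
    (a b : ZMod N) (hγ : IsPolyDiag N s(a, b)) :
    ∀ α β : List (OArc N), IsTGPath N T a b α → IsTGPath N T a b β →
      pathValue N x α = pathValue N x β → α = β := by
  intro α β hα hβ hval
  exact monomial_injective' hN hT x hx hγ α β hα hβ hval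

end PolygonCA
end

section
/- With the setup above, every (T,γ)-path has first arc with underlying pair equal to τ1 or τ3; that is, P_T(γ) is the disjoint union of P_T(γ)_{τ1} and P_T(γ)_{τ3}. (This is Lemma 4.3 of the paper in the polygon model.) -/
open scoped Classical

namespace PolygonCA


private lemma val_sub_eq {N : ℕ} [NeZero N] (a u v : ZMod N) :
    (u - v).val = if (v - a).val ≤ (u - a).val then (u - a).val - (v - a).val
      else (u - a).val + (N - (v - a).val) := by
  have h1 : u - v = (u - a) - (v - a) := by ring
  rw [h1]
  set x := u - a with hx
  set y := v - a with hy
  have hxN : x.val < N := ZMod.val_lt x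
  have hyN : y.val < N := ZMod.val_lt y
  split_ifs with h
  · have e1 : x - y = ((x.val - y.val : ℕ) : ZMod N) := by
      rw [Nat.cast_sub h, ZMod.natCast_rightInverse x, ZMod.natCast_rightInverse y]
    rw [e1, ZMod.val_cast_of_lt (by omega)]
  · have e1 : x - y = ((x.val + (N - y.val) : ℕ) : ZMod N) := by
      push_cast [Nat.cast_sub hyN.le]
      rw [ZMod.natCast_rightInverse x, ZMod.natCast_rightInverse y, ZMod.natCast_self]
      ring
    rw [e1, ZMod.val_cast_of_lt (by omega)]

private lemma sbtw_from_b {N : ℕ} [NeZero N] {a b w : ZMod N}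
    (hb : 0 < (b - a).val) : Sbtw N b w a ↔ (b - a).val < (w - a).val := by
  have hbn := ZMod.val_lt (b - a)
  have hwn := ZMod.val_lt (w - a)
  have h0 : (a - a).val = 0 := by simp
  unfold Sbtw
  rw [val_sub_eq a w b, val_sub_eq a a b]
  split_ifs <;> omega

private lemma sbtw_to_a {N : ℕ} [NeZero N] {a x w : ZMod N}
    (h1 : 0 < (x - a).val) (h2 : (x - a).val < (w - a).val) :
    Sbtw N x w a := by
  have hwn := ZMod.val_lt (w - a)
  have hxn := ZMod.val_lt (x - a)
  have h0 : (a - a).val = 0 := by simp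
  unfold Sbtw
  rw [val_sub_eq a w x, val_sub_eq a a x]
  split_ifs <;> omega

private lemma f_inj {N : ℕ} [NeZero N] {a u v : ZMod N}
    (h : (u - a).val = (v - a).val) : u = v := by
  have : u - a = v - a := by
    rw [← ZMod.natCast_rightInverse (u - a), ← ZMod.natCast_rightInverse (v - a), h]
  exact sub_left_inj.mp this

private lemma boundary_not_crosses {N : ℕ} (hN2 : 2 ≤ N) {e f : Sym2 (ZMod N)}
    (hb : IsBoundaryArc N e) : ¬ Crosses N e f := by
  haveI : NeZero N := ⟨by omega⟩
  haveI : Fact (1 < N) := ⟨by omega⟩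
  obtain ⟨p, rfl⟩ := hb
  rintro ⟨p', q', u, v, he, hf, h1, h2⟩
  have hone : ((p + 1) - p).val = 1 := by
    rw [show p + 1 - p = (1 : ZMod N) by ring, ZMod.val_one]
  rw [Sym2.eq_iff] at he
  rcases he with ⟨rfl, rfl⟩ | ⟨rfl, rfl⟩
  · obtain ⟨h1a, h1b⟩ := h1
    rw [hone] at h1b
    omega
  · obtain ⟨h2a, h2b⟩ := h2
    rw [hone] at h2b
    omega

private lemma diag_not_boundary {N : ℕ} {e : Sym2 (ZMod N)} (h : IsPolyDiag N e) :
    ¬ IsBoundaryArc N e := by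
  obtain ⟨p, q, rfl, hpq, h1, h2⟩ := h
  rintro ⟨r, hr⟩
  rw [Sym2.eq_iff] at hr
  rcases hr with ⟨hp, hq⟩ | ⟨hp, hq⟩
  · exact h1 (hq.trans (by rw [hp]))
  · exact h2 (hp.trans (by rw [hq]))

/-- **Lemma 4.3** (polygon model): with the setup of Lemma 4.2, every
`(T,γ)`-path starts with an arc whose underlying arc is `τ₁ = {a,d}` or
`τ₃ = {a,c}` (and not both, so `P_T(γ) = P_T(γ)_{τ₁} ⊔ P_T(γ)_{τ₃}`). -/
theorem first_arc_dichotomy (N : ℕ) (hN : 4 ≤ N)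
    (T : Finset (Sym2 (ZMod N))) (hT : IsTriangulation N T)
    (a b c d : ZMod N)
    (hγ : IsPolyDiag N s(a, b)) (hγT : s(a, b) ∉ T)
    (hτ2 : s(c, d) ∈ T) (hτ2γ : Crosses N s(c, d) s(a, b))
    (hc : Sbtw N a c b) (hd : Sbtw N b d a)
    (hfirst : ∀ e ∈ T, Crosses N e s(a, b) → e ≠ s(c, d) →
      CrossBefore N a b s(c, d) e)
    (hτ1 : s(a, d) ∈ T ∨ IsBoundaryArc N s(a, d))
    (hτ3 : s(a, c) ∈ T ∨ IsBoundaryArc N s(a, c)) :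
    ∀ α : List (OArc N), IsTGPath N T a b α → ∀ e, α.head? = some e →
      (Sym2.mk.uncurry e = s(a, d) ∨ Sym2.mk.uncurry e = s(a, c)) ∧
      ¬(Sym2.mk.uncurry e = s(a, d) ∧ Sym2.mk.uncurry e = s(a, c)) := by
  haveI : NeZero N := ⟨by omega⟩
  obtain ⟨hC0, hCB⟩ := hc
  have hBN : (b - a).val < N := ZMod.val_lt _
  have hDN : (d - a).val < N := ZMod.val_lt _
  have hB0 : 0 < (b - a).val := lt_trans hC0 hCB
  have hBD : (b - a).val < (d - a).val := (sbtw_from_b hB0).mp hd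
  have haa : (a - a).val = 0 := by simp
  -- τ1 ≠ τ3
  have hne13 : s(a, d) ≠ s(a, c) := by
    intro h
    rw [Sym2.eq_iff] at h
    rcases h with ⟨-, hdc⟩ | ⟨hac, -⟩
    · rw [hdc] at hBD; omega
    · rw [← hac, haa] at hC0; omega
  intro α hα e he
  obtain ⟨⟨hnil, harcs, hhead, hlast, hchain⟩, hred, hodd, hcross, hnodup, horder⟩ := hα
  cases α with
  | nil => simp at he
  | cons e0 rest =>
  simp only [List.head?_cons, Option.some.injEq] at he
  subst he
  obtain ⟨ea, x⟩ := e0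
  simp only [List.head?_cons, Option.map_some, Option.some.injEq] at hhead
  subst ea
  refine ⟨?_, fun ⟨h1, h2⟩ => hne13 (h1 ▸ h2)⟩
  cases rest with
  | nil =>
    simp only [List.getLast?_singleton, Option.map_some, Option.some.injEq] at hlast
    subst x
    have hmem := harcs (a, b) (List.mem_singleton.mpr rfl)
    rcases hmem with hmem | hmem
    · exact absurd hmem hγT
    · exact absurd hmem (diag_not_boundary hγ)
  | cons e2 rest2 =>
    obtain ⟨x', y⟩ := e2
    have hch : x' = x := (List.isChain_cons_cons.mp hchain).1
    subst x'
    have h1lt : 1 < ((a, x) :: (x, y) :: rest2).length := by simp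
    obtain ⟨he2T, he2cross⟩ := hcross 1 h1lt rfl
    simp only [List.get] at he2T he2cross
    have hmem : (a, x) ∈ (a, x) :: (x, y) :: rest2 := List.mem_cons_self
    -- key: if s(a,x) crosses s(c,d), contradiction
    have hnocross : ¬ Crosses N (Sym2.mk.uncurry (a, x)) s(c, d) := by
      intro hcr
      rcases harcs (a, x) hmem with hT' | hB'
      · exact hT.noncross _ hT' _ hτ2 hcr
      · exact boundary_not_crosses (by omega) hB' hcr
    by_cases hcd : (s(x, y) : Sym2 (ZMod N)) = s(c, d)
    · rw [Sym2.eq_iff] at hcd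
      rcases hcd with ⟨hxc, -⟩ | ⟨hxd, -⟩
      · exact Or.inr (by rw [hxc]; rfl)
      · exact Or.inl (by rw [hxd]; rfl)
    · have hcb := hfirst _ he2T he2cross (fun h => hcd h)
      obtain ⟨c0, d0, c0', d0', hcd0, hg', hs1, hs2, hs3, hs4, hle1, hle2, hstrict⟩ := hcb
      -- identify c0 = c, d0 = d
      rw [Sym2.eq_iff] at hcd0
      have hc0 : c0 = c ∧ d0 = d := by
        rcases hcd0 with ⟨h1, h2⟩ | ⟨h1, h2⟩
        · exact ⟨h1.symm, h2.symm⟩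
        · exfalso
          obtain ⟨-, hs1b⟩ := hs1
          rw [← h2] at hs1b
          omega
      obtain ⟨hc0a, hc0b⟩ := hc0
      subst c0
      subst d0
      obtain ⟨hC'0, hC'B⟩ := hs3
      have hBD' : (b - a).val < (d0' - a).val := (sbtw_from_b hB0).mp hs4
      have hD'N : (d0' - a).val < N := ZMod.val_lt _
      have hD'D : (d0' - a).val ≤ (d - a).val := by
        rw [val_sub_eq a a d, val_sub_eq a a d0'] at hle2
        split_ifs at hle2 <;> omega
      rw [Function.uncurry_apply_pair, Sym2.eq_iff] at hg'
      rcases hg' with ⟨hxc', -⟩ | ⟨hxd', -⟩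
      · -- x = c0'
        subst c0'
        have hCC' : (c - a).val = (x - a).val := by
          by_contra hne
          exact hnocross ⟨a, x, c, d, rfl, rfl, ⟨hC0, by omega⟩,
            sbtw_to_a hC'0 (by omega)⟩
        have hxc : x = c := (f_inj hCC'.symm)
        exact Or.inr (by rw [hxc]; rfl)
      · -- x = d0'
        subst d0'
        have hDD' : (d - a).val = (x - a).val := by
          by_contra hne
          exact hnocross ⟨a, x, c, d, rfl, rfl, ⟨hC0, by omega⟩,
            sbtw_to_a (by omega) (by omega)⟩
        have hxd : x = d := (f_inj hDD'.symm)
        exact Or.inl (by rw [hxd]; rfl)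

end PolygonCA
end
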